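/- arXiv:2206.09442 — 8 statements merged into one kernel-verified Lean document; each statement's English description precedes it below -/
import Mathlib

section
/- Let U be a δ-supercompactness measure for κ. Then for every function F : [𝒫_κ(δ)]^{[<ω]} → {0,1} there is a set A ∈ U such that for each n ∈ ω, F is constant on [A]^{[n]}. -/
noncomputable section

open Set

/-- `𝒫_κ(δ)`: the collection of subsets of the ordinals below `δ` of cardinality `< κ`. -/
abbrev Pk (κ δ : Ordinal) : Type 1 :=
  {P : Set Ordinal // P ⊆ Set.Iio δ ∧ Cardinal.mk ↥P < Cardinal.lift.{1,0} κ.card}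

/-- Strong inclusion `P ⊏~ Q`: `P ⊊ Q` and `|P| < |Q ∩ κ|`. -/
def SInc (κ : Ordinal) (P Q : Set Ordinal) : Prop :=
  P ⊂ Q ∧ Cardinal.mk ↥P < Cardinal.mk ↥(Q ∩ Set.Iio κ)

/-- A finite `⊏~`-increasing sequence of elements of `𝒫_κ(δ)`, coded as a list. -/
def IncList (κ δ : Ordinal) (s : List (Pk κ δ)) : Prop :=
  s.Chain' fun P Q => SInc κ P.1 Q.1

/-- `U` is a `δ`-supercompactness measure for `κ`: a proper ultrafilter on `𝒫_κ(δ)`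
that is `κ`-complete, fine, and normal. -/
structure IsSCMeasure (κ δ : Ordinal) (U : Set (Set (Pk κ δ))) : Prop where
  proper : ∅ ∉ U
  upward : ∀ {A B : Set (Pk κ δ)}, A ∈ U → A ⊆ B → B ∈ U
  ultra : ∀ A : Set (Pk κ δ), A ∈ U ∨ Aᶜ ∈ U
  complete : ∀ (ι : Type) (f : ι → Set (Pk κ δ)), Cardinal.mk ι < κ.card →
    (∀ i, f i ∈ U) → (⋂ i, f i) ∈ U
  fine : ∀ ξ < δ, {P : Pk κ δ | ξ ∈ P.1} ∈ U
  normal : ∀ A ∈ U, ∀ F : Pk κ δ → Ordinal, (∀ P ∈ A, F P ∈ P.1) →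
    ∃ B ∈ U, ∃ c, ∀ P ∈ B, F P = c

/-- `P ↓ α = P ∩ α`. -/
def restrictP (κ δ α : Ordinal) (P : Pk κ δ) : Pk κ α :=
  ⟨P.1 ∩ Set.Iio α, Set.inter_subset_right,
    lt_of_le_of_lt (Cardinal.mk_le_mk_of_subset Set.inter_subset_left) P.2.2⟩

/-- `A ↓ α = {P ∩ α : P ∈ A}`. -/
def projSet (κ δ α : Ordinal) (A : Set (Pk κ δ)) : Set (Pk κ α) :=
  restrictP κ δ α '' A

/-- `U_α = {A ↓ α : A ∈ U}`. -/
def Uproj (κ δ α : Ordinal) (U : Set (Set (Pk κ δ))) : Set (Set (Pk κ α)) :=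
  projSet κ δ α '' U

/-- `p = (s, A)` is a condition of the supercompact Prikry forcing `ℙ_U`:
`s` is a finite `⊏~`-increasing sequence (the stem), `A ∈ U` (the measure-one part),
and every member of `A` strongly includes the last entry of the stem. -/
def IsCond (κ δ : Ordinal) (U : Set (Set (Pk κ δ)))
    (p : List (Pk κ δ) × Set (Pk κ δ)) : Prop :=
  IncList κ δ p.1 ∧ p.2 ∈ U ∧
    ∀ hne : p.1 ≠ [], ∀ Q ∈ p.2, SInc κ (p.1.getLast hne).1 Q.1

/-- The order of the supercompact Prikry forcing: `p ≤ q` iff the stem of `q` is an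
initial segment of the stem of `p`, the new stem entries lie in the measure-one part
of `q`, and the measure-one part of `p` is contained in that of `q`. -/
def CondLe {X : Type*} (p q : List X × Set X) : Prop :=
  q.1 <+: p.1 ∧ (∀ x ∈ p.1.drop q.1.length, x ∈ q.2) ∧ p.2 ⊆ q.2

/-- Compatibility of two conditions of `ℙ_U`. -/
def Compat (κ δ : Ordinal) (U : Set (Set (Pk κ δ)))
    (p q : List (Pk κ δ) × Set (Pk κ δ)) : Prop :=
  ∃ r, IsCond κ δ U r ∧ CondLe r p ∧ CondLe r q

/-- `p ↓ α`. -/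
def condProj (κ δ α : Ordinal) (p : List (Pk κ δ) × Set (Pk κ δ)) :
    List (Pk κ α) × Set (Pk κ α) :=
  (p.1.map (restrictP κ δ α), projSet κ δ α p.2)

/-- `p = (s, A)` is `α`-nice: every finite `⊏~`-increasing sequence from `A ↓ α`
is of the form `r ↓ α` for some finite `⊏~`-increasing sequence `r` from `A`. -/
def IsNice (κ δ α : Ordinal) (p : List (Pk κ δ) × Set (Pk κ δ)) : Prop :=
  ∀ t : List (Pk κ α), IncList κ α t → (∀ x ∈ t, x ∈ projSet κ δ α p.2) →
    ∃ r : List (Pk κ δ), IncList κ δ r ∧ (∀ x ∈ r, x ∈ p.2) ∧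
      r.map (restrictP κ δ α) = t

/-- The pointwise image `f '' P`, as an element of `𝒫_κ(δ)`. -/
def mapP (κ δ : Ordinal) (f : Ordinal → Ordinal)
    (hf : Set.MapsTo f (Set.Iio δ) (Set.Iio δ)) (P : Pk κ δ) : Pk κ δ :=
  ⟨f '' P.1, fun x hx => by
      obtain ⟨y, hy, rfl⟩ := hx
      exact hf (P.2.1 hy),
    lt_of_le_of_lt Cardinal.mk_image_le P.2.2⟩

/-- The map `π_f` induced by `f` on conditions:
`π_f (s, A) = ((f''s(0), …, f''s(lh s − 1)), {f''P : P ∈ A})`. -/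
def condMap (κ δ : Ordinal) (f : Ordinal → Ordinal)
    (hf : Set.MapsTo f (Set.Iio δ) (Set.Iio δ))
    (p : List (Pk κ δ) × Set (Pk κ δ)) : List (Pk κ δ) × Set (Pk κ δ) :=
  (p.1.map (mapP κ δ f hf), mapP κ δ f hf '' p.2)

/-- A filter on the supercompact Prikry forcing `ℙ_U`: a nonempty, upward-closed,
downward-directed set of conditions. -/
def IsPFilter (κ δ : Ordinal) (U : Set (Set (Pk κ δ)))
    (g : Set (List (Pk κ δ) × Set (Pk κ δ))) : Prop :=
  (∀ p ∈ g, IsCond κ δ U p) ∧ g.Nonempty ∧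
    (∀ p ∈ g, ∀ q, IsCond κ δ U q → CondLe p q → q ∈ g) ∧
    (∀ p ∈ g, ∀ q ∈ g, ∃ r ∈ g, CondLe r p ∧ CondLe r q)

/-- The quotient forcing `Q_{αδ}(g) = {q ∈ ℙ^α_U : q ↓ α ∈ g}`. -/
def QSet (κ δ α : Ordinal) (U : Set (Set (Pk κ δ)))
    (g : Set (List (Pk κ α) × Set (Pk κ α))) :
    Set (List (Pk κ δ) × Set (Pk κ δ)) :=
  {q | IsCond κ δ U q ∧ IsNice κ δ α q ∧ condProj κ δ α q ∈ g}

/-- An `ω`-length `⊏~`-increasing sequence of elements of `𝒫_κ(δ)`. -/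
def SeqInc (κ δ : Ordinal) (σ : ℕ → Pk κ δ) : Prop :=
  ∀ n, SInc κ (σ n).1 (σ (n + 1)).1

/-- The filter `F_σ` generated by an infinite `⊏~`-increasing sequence `σ`:
all conditions `(t, A)` with `t = σ ↾ lh t` and `σ(i) ∈ A` for all `i ≥ lh t`. -/
def Fseq (κ δ : Ordinal) (U : Set (Set (Pk κ δ))) (σ : ℕ → Pk κ δ) :
    Set (List (Pk κ δ) × Set (Pk κ δ)) :=
  {p | IsCond κ δ U p ∧ p.1 = (List.range p.1.length).map σ ∧
    ∀ i, p.1.length ≤ i → σ i ∈ p.2}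


namespace RowAux

local notation "olt" => ((· < ·) : Ordinal → Ordinal → Prop)

variable {κ δ : Ordinal} {U : Set (Set (Pk κ δ))}

lemma sinc_trans {P Q R : Set Ordinal} (h1 : SInc κ P Q) (h2 : SInc κ Q R) : SInc κ P R :=
  ⟨h1.1.trans h2.1, h1.2.trans_le (Cardinal.mk_le_mk_of_subset
    (Set.inter_subset_inter_left _ h2.1.subset))⟩

lemma univ_mem (hU : IsSCMeasure κ δ U) : Set.univ ∈ U := by
  rcases hU.ultra Set.univ with h | h
  · exact h
  · rw [Set.compl_univ] at h; exact absurd h hU.proper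

lemma nonempty_of_mem (hU : IsSCMeasure κ δ U) {A} (hA : A ∈ U) : A.Nonempty := by
  rcases A.eq_empty_or_nonempty with rfl | h
  · exact absurd hA hU.proper
  · exact h

lemma inter_mem (hκunc : Cardinal.aleph0 < κ.card) (hU : IsSCMeasure κ δ U)
    {A B} (hA : A ∈ U) (hB : B ∈ U) : A ∩ B ∈ U := by
  have h0 : (⋂ b : Bool, (if b then A else B)) ∈ U := by
    refine hU.complete Bool _ ((Cardinal.lt_aleph0_of_finite Bool).trans hκunc) ?_
    rintro (_ | _) <;> simp [hA, hB]
  refine hU.upward h0 fun x hx => ?_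
  exact ⟨by simpa using Set.mem_iInter.mp hx true, by simpa using Set.mem_iInter.mp hx false⟩

lemma complete' (hU : IsSCMeasure κ δ U) (ι : Type 1) (f : ι → Set (Pk κ δ))
    (h : Cardinal.mk ι < Cardinal.lift.{1, 0} κ.card) (hf : ∀ i, f i ∈ U) :
    (⋂ i, f i) ∈ U := by
  obtain ⟨c, hc, hceq⟩ := Cardinal.lt_lift_iff.mp h
  have hmk : Cardinal.mk (Quotient.out c) = c := Cardinal.mk_out c
  have hmk2 : Cardinal.mk (ULift.{1} (Quotient.out c)) = Cardinal.mk ι := by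
    rw [Cardinal.mk_uLift, hmk, hceq]
  obtain ⟨e⟩ := Cardinal.eq.mp hmk2
  have h0 : (⋂ j : Quotient.out c, f (e ⟨j⟩)) ∈ U :=
    hU.complete _ _ (by rw [hmk]; exact hc) fun j => hf _
  refine hU.upward h0 fun x hx => Set.mem_iInter.mpr fun i => ?_
  have := Set.mem_iInter.mp hx (e.symm i).down
  rwa [ULift.up_down, e.apply_symm_apply] at this

lemma subset_mem (hU : IsSCMeasure κ δ U) {S : Set Ordinal} (hSδ : S ⊆ Set.Iio δ)
    (hS : Cardinal.mk S < Cardinal.lift.{1, 0} κ.card) :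
    {R : Pk κ δ | S ⊆ R.1} ∈ U := by
  have h0 := complete' hU S (fun ξ => {R : Pk κ δ | ξ.1 ∈ R.1}) hS
    (fun ξ => hU.fine ξ.1 (hSδ ξ.2))
  refine hU.upward h0 fun R hR ξ hξ => ?_
  exact Set.mem_iInter.mp hR ⟨ξ, hξ⟩

/-- order type of a set of ordinals -/
noncomputable def otp (S : Set Ordinal) : Ordinal.{1} := Ordinal.type (Subrel olt (· ∈ S))

lemma card_otp (S : Set Ordinal) : (otp S).card = Cardinal.mk S := Ordinal.card_type _

lemma otp_Iio (c : Ordinal) : otp (Set.Iio c) = Ordinal.lift.{1, 0} c := by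
  rw [otp, ← Ordinal.typein_ordinal c, ← Ordinal.type_subrel]
  rfl

lemma typein_subrel (S : Set Ordinal.{0}) (a : ↥S) :
    (Ordinal.typein (Subrel olt (· ∈ S))).toRelEmbedding a = otp (S ∩ Set.Iio a.1) := by
  rw [← Ordinal.type_subrel, otp]
  refine Ordinal.type_eq.2 ⟨?_⟩
  exact {
    toFun := fun b => ⟨b.1.1, b.1.2, b.2⟩
    invFun := fun x => ⟨⟨x.1, x.2.1⟩, x.2.2⟩
    left_inv := fun b => rfl
    right_inv := fun x => rfl
    map_rel_iff' := Iff.rfl }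


/-- Lemma N: an Ordinal.{1}-valued function bounded by `otp (R ∩ κ)` is a.e. constant. -/
lemma const_of_lt_otp (hκunc : Cardinal.aleph0 < κ.card) (hκcard : κ.card.ord = κ)
    (hκδ : κ ≤ δ) (hU : IsSCMeasure κ δ U)
    {B : Set (Pk κ δ)} (hB : B ∈ U) (g : Pk κ δ → Ordinal.{1})
    (hg : ∀ R ∈ B, g R < otp (R.1 ∩ Set.Iio κ)) :
    ∃ C ∈ U, C ⊆ B ∧ ∃ c, ∀ R ∈ C, g R = c := by
  classical
  have hsurj : ∀ R (hR : R ∈ B), ∃ a : ↥(R.1 ∩ Set.Iio κ),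
      (Ordinal.typein (Subrel olt (· ∈ R.1 ∩ Set.Iio κ))).toRelEmbedding a = g R :=
    fun R hR => Ordinal.typein_surj _ (hg R hR)
  set h : Pk κ δ → Ordinal := fun R =>
    if hR : R ∈ B then ((hsurj R hR).choose : ↥(R.1 ∩ Set.Iio κ)).1 else 0 with hdef
  have hreg : ∀ R ∈ B, h R ∈ R.1 := by
    intro R hR
    simp only [hdef, dif_pos hR]
    exact ((hsurj R hR).choose.2).1
  obtain ⟨B', hB', c, hc⟩ := hU.normal B hB h hreg
  have hBB' : B' ∩ B ∈ U := inter_mem hκunc hU hB' hB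
  obtain ⟨R₀, hR₀⟩ := nonempty_of_mem hU hBB'
  have hcκ : c < κ := by
    have h1 : h R₀ = c := hc R₀ hR₀.1
    have h2 : h R₀ = ((hsurj R₀ hR₀.2).choose).1 := by simp only [hdef, dif_pos hR₀.2]
    have h4 := ((hsurj R₀ hR₀.2).choose.2).2
    have h3 : ((hsurj R₀ hR₀.2).choose).1 = c := h2.symm.trans h1
    rw [h3] at h4
    exact h4
  have hD : {R : Pk κ δ | Set.Iio c ⊆ R.1} ∈ U := by
    refine subset_mem hU (fun x hx => lt_of_lt_of_le (lt_trans hx hcκ) hκδ) ?_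
    rw [Ordinal.mk_Iio_ordinal]
    exact Cardinal.lift_lt.2 (Cardinal.lt_ord.1 (by rw [hκcard]; exact hcκ))
  refine ⟨(B' ∩ B) ∩ {R | Set.Iio c ⊆ R.1}, inter_mem hκunc hU hBB' hD,
    fun R hR => hR.1.2, Ordinal.lift.{1, 0} c, ?_⟩
  rintro R ⟨⟨hR1, hR2⟩, hR3⟩
  have hhR : h R = c := hc R hR1
  have haval : ((hsurj R hR2).choose).1 = c := by
    rw [← hhR]; simp only [hdef, dif_pos hR2]
  rw [← (hsurj R hR2).choose_spec, typein_subrel]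
  have hseteq : (R.1 ∩ Set.Iio κ) ∩ Set.Iio ((hsurj R hR2).choose).1 = Set.Iio c := by
    rw [haval]
    refine Set.eq_of_subset_of_subset (fun x hx => hx.2) (fun x hx => ⟨⟨hR3 hx, ?_⟩, hx⟩)
    exact lt_trans hx hcκ
  rw [hseteq, otp_Iio]

/-- Set pressing-down: an a.e. set-regressive function with small values is a.e. constant. -/
lemma set_pressing (hκunc : Cardinal.aleph0 < κ.card) (hκcard : κ.card.ord = κ)
    (hκδ : κ ≤ δ) (hU : IsSCMeasure κ δ U)
    {B : Set (Pk κ δ)} (hB : B ∈ U) (f : Pk κ δ → Set Ordinal)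
    (hsub : ∀ R ∈ B, f R ⊆ R.1)
    (hcard : ∀ R ∈ B, Cardinal.mk (f R) < Cardinal.mk ↥(R.1 ∩ Set.Iio κ)) :
    ∃ C ∈ U, C ⊆ B ∧ ∃ x, ∀ R ∈ C, f R = x := by
  classical
  have hg : ∀ R ∈ B, otp (f R) < otp (R.1 ∩ Set.Iio κ) := by
    intro R hR
    calc otp (f R) < (Cardinal.mk ↥(R.1 ∩ Set.Iio κ)).ord := by
          rw [Cardinal.lt_ord, card_otp]; exact hcard R hR
      _ ≤ otp (R.1 ∩ Set.Iio κ) := by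
          rw [← card_otp]; exact Cardinal.ord_card_le _
  obtain ⟨C₁, hC₁U, hC₁B, θ, hθ⟩ := const_of_lt_otp hκunc hκcard hκδ hU hB
    (fun R => otp (f R)) hg
  obtain ⟨R₀, hR₀⟩ := nonempty_of_mem hU hC₁U
  have hθκ : θ < Ordinal.lift.{1, 0} κ := by
    rw [← hθ R₀ hR₀, ← hκcard, Cardinal.lift_ord, Cardinal.lt_ord, card_otp]
    exact ((hcard R₀ (hC₁B hR₀)).trans_le
      (Cardinal.mk_le_mk_of_subset Set.inter_subset_left)).trans R₀.2.2
  obtain ⟨θ', hθ'κ, hθ'⟩ := Ordinal.lt_lift_iff.mp hθκ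
  have hβex : ∀ (β : ↥(Set.Iio θ')) R (hR : R ∈ C₁), ∃ a : ↥(f R),
      (Ordinal.typein (Subrel olt (· ∈ f R))).toRelEmbedding a = Ordinal.lift.{1, 0} β.1 := by
    intro β R hR
    apply Ordinal.typein_surj
    show _ < Ordinal.type (Subrel olt (· ∈ f R))
    have : Ordinal.type (Subrel olt (· ∈ f R)) = θ := hθ R hR
    rw [this, ← hθ']
    exact Ordinal.lift_lt.2 β.2
  set hfun : ↥(Set.Iio θ') → Pk κ δ → Ordinal := fun β R =>
    if hR : R ∈ C₁ then ((hβex β R hR).choose).1 else 0 with hfdef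
  have hreg : ∀ β, ∀ R ∈ C₁, hfun β R ∈ R.1 := by
    intro β R hR
    simp only [hfdef, dif_pos hR]
    exact hsub R (hC₁B hR) (hβex β R hR).choose.2
  have hconst : ∀ β : ↥(Set.Iio θ'), ∃ D ∈ U, ∃ x, ∀ R ∈ D, hfun β R = x :=
    fun β => hU.normal C₁ hC₁U (hfun β) (hreg β)
  choose D hD x hx using hconst
  have hiD : (⋂ β, D β) ∈ U := by
    refine complete' hU _ D ?_ hD
    rw [Ordinal.mk_Iio_ordinal]
    exact Cardinal.lift_lt.2 (Cardinal.lt_ord.1 (by rw [hκcard]; exact hθ'κ))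
  refine ⟨C₁ ∩ ⋂ β, D β, inter_mem hκunc hU hC₁U hiD, fun R hR => hC₁B hR.1,
    Set.range x, ?_⟩
  rintro R ⟨hRC, hRD⟩
  refine Set.eq_of_subset_of_subset (fun a ha => ?_) ?_
  · have hlt : (Ordinal.typein (Subrel olt (· ∈ f R))).toRelEmbedding ⟨a, ha⟩ < θ := by
      rw [← hθ R hRC]
      exact Ordinal.typein_lt_type _ _
    rw [← hθ'] at hlt
    obtain ⟨β, hβθ, hβ⟩ := Ordinal.lt_lift_iff.mp hlt
    have hspec := (hβex ⟨β, hβθ⟩ R hRC).choose_spec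
    have heq : (⟨a, ha⟩ : ↥(f R)) = (hβex ⟨β, hβθ⟩ R hRC).choose :=
      Ordinal.typein_injective _ (by rw [hspec, hβ])
    have hval : a = hfun ⟨β, hβθ⟩ R := by
      simp only [hfdef, dif_pos hRC]
      exact congrArg Subtype.val heq
    rw [hval, hx ⟨β, hβθ⟩ R (Set.mem_iInter.mp hRD _)]
    exact Set.mem_range_self _
  · rintro a ⟨β, rfl⟩
    rw [← hx β R (Set.mem_iInter.mp hRD β)]
    simp only [hfdef, dif_pos hRC]
    exact (hβex β R hRC).choose.2

/-- Diagonal intersection indexed by `𝒫_κ(δ)` over strong inclusion. -/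
lemma pdiag (hκunc : Cardinal.aleph0 < κ.card) (hκcard : κ.card.ord = κ)
    (hκδ : κ ≤ δ) (hU : IsSCMeasure κ δ U)
    (A : Pk κ δ → Set (Pk κ δ)) (hA : ∀ Q, A Q ∈ U) :
    {R : Pk κ δ | ∀ Q, SInc κ Q.1 R.1 → R ∈ A Q} ∈ U := by
  classical
  by_contra hΔ
  have hcompl : {R : Pk κ δ | ∀ Q, SInc κ Q.1 R.1 → R ∈ A Q}ᶜ ∈ U := by
    rcases hU.ultra {R : Pk κ δ | ∀ Q, SInc κ Q.1 R.1 → R ∈ A Q} with h | h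
    exacts [absurd h hΔ, h]
  have hch : ∀ R ∈ {R : Pk κ δ | ∀ Q, SInc κ Q.1 R.1 → R ∈ A Q}ᶜ,
      ∃ Q : Pk κ δ, SInc κ Q.1 R.1 ∧ R ∉ A Q := by
    intro R hR
    have h1 : ¬ (∀ Q, SInc κ Q.1 R.1 → R ∈ A Q) := hR
    push_neg at h1
    exact h1
  choose Qf hQ1 hQ2 using hch
  set f : Pk κ δ → Set Ordinal := fun R =>
    if hR : R ∈ {R : Pk κ δ | ∀ Q, SInc κ Q.1 R.1 → R ∈ A Q}ᶜ then (Qf R hR).1 else ∅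
    with hfd
  have hsub : ∀ R ∈ {R : Pk κ δ | ∀ Q, SInc κ Q.1 R.1 → R ∈ A Q}ᶜ, f R ⊆ R.1 := by
    intro R hR
    simp only [hfd, dif_pos hR]
    exact (hQ1 R hR).1.subset
  have hcard : ∀ R ∈ {R : Pk κ δ | ∀ Q, SInc κ Q.1 R.1 → R ∈ A Q}ᶜ,
      Cardinal.mk (f R) < Cardinal.mk ↥(R.1 ∩ Set.Iio κ) := by
    intro R hR
    simp only [hfd, dif_pos hR]
    exact (hQ1 R hR).2
  obtain ⟨C, hCU, hCB, x, hx⟩ := set_pressing hκunc hκcard hκδ hU hcompl f hsub hcard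
  obtain ⟨R₀, hR₀C⟩ := nonempty_of_mem hU hCU
  have hR₀ := hCB hR₀C
  have hxQ : (Qf R₀ hR₀).1 = x := by
    have h1 := hx R₀ hR₀C
    simpa only [hfd, dif_pos hR₀] using h1
  have hbad : ∀ R ∈ C, R ∉ A (Qf R₀ hR₀) := by
    intro R hRC
    have hRB := hCB hRC
    have h1 : (Qf R hRB).1 = x := by
      have h2 := hx R hRC
      simpa only [hfd, dif_pos hRB] using h2
    have hQeq : Qf R hRB = Qf R₀ hR₀ := Subtype.ext (h1.trans hxQ.symm)
    exact hQeq ▸ hQ2 R hRB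
  obtain ⟨R₁, hR₁⟩ := nonempty_of_mem hU (inter_mem hκunc hU hCU (hA (Qf R₀ hR₀)))
  exact hbad R₁ hR₁.1 hR₁.2

/-- Rowbottom for a fixed length `n`. -/
lemma claimN (hκunc : Cardinal.aleph0 < κ.card) (hκcard : κ.card.ord = κ)
    (hκδ : κ ≤ δ) (hU : IsSCMeasure κ δ U) :
    ∀ (n : ℕ) (F : List (Pk κ δ) → Fin 2), ∃ A ∈ U,
      ∀ s t : List (Pk κ δ), IncList κ δ s → IncList κ δ t →
        (∀ x ∈ s, x ∈ A) → (∀ x ∈ t, x ∈ A) → s.length = n → t.length = n →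
        F s = F t := by
  intro n
  induction n with
  | zero =>
    intro F
    refine ⟨Set.univ, univ_mem hU, fun s t _ _ _ _ hs ht => ?_⟩
    rw [List.length_eq_zero_iff.mp hs, List.length_eq_zero_iff.mp ht]
  | succ n ih =>
    intro F
    classical
    choose A hAU hAhom using fun Q : Pk κ δ => ih (fun s => F (Q :: s))
    set c : Pk κ δ → Fin 2 := fun Q =>
      if h : ∃ s, IncList κ δ s ∧ (∀ x ∈ s, x ∈ A Q) ∧ s.length = n
      then F (Q :: h.choose) else 0 with hcdef
    have hkey : ∀ Q s, IncList κ δ s → (∀ x ∈ s, x ∈ A Q) → s.length = n →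
        F (Q :: s) = c Q := by
      intro Q s hs hsA hsl
      have hex : ∃ s, IncList κ δ s ∧ (∀ x ∈ s, x ∈ A Q) ∧ s.length = n := ⟨s, hs, hsA, hsl⟩
      rw [hcdef]
      simp only [dif_pos hex]
      exact hAhom Q s hex.choose hs hex.choose_spec.1 hsA hex.choose_spec.2.1 hsl
        hex.choose_spec.2.2
    obtain ⟨B, hBU, c₀, hB⟩ : ∃ B ∈ U, ∃ c₀, ∀ Q ∈ B, c Q = c₀ := by
      rcases hU.ultra {Q | c Q = 0} with h | h
      · exact ⟨_, h, 0, fun Q hQ => hQ⟩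
      · refine ⟨_, h, 1, fun Q hQ => ?_⟩
        have h1 : c Q ≠ 0 := hQ
        have h2 : ∀ a : Fin 2, a ≠ 0 → a = 1 := by decide
        exact h2 _ h1
    have hΔ := pdiag hκunc hκcard hκδ hU A hAU
    refine ⟨B ∩ {R | ∀ Q, SInc κ Q.1 R.1 → R ∈ A Q}, inter_mem hκunc hU hBU hΔ, ?_⟩
    have main : ∀ s, IncList κ δ s →
        (∀ x ∈ s, x ∈ B ∩ {R | ∀ Q, SInc κ Q.1 R.1 → R ∈ A Q}) →
        s.length = n + 1 → F s = c₀ := by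
      intro s hs hsA hsl
      cases s with
      | nil => simp at hsl
      | cons Q rest =>
        haveI : IsTrans (Pk κ δ) (fun P Q : Pk κ δ => SInc κ P.1 Q.1) :=
          ⟨fun _ _ _ h1 h2 => sinc_trans h1 h2⟩
        have hp := List.isChain_iff_pairwise.mp hs
        have hQrest := (List.pairwise_cons.mp hp).1
        have hrest : IncList κ δ rest :=
          List.isChain_iff_pairwise.mpr (List.pairwise_cons.mp hp).2
        have hrA : ∀ x ∈ rest, x ∈ A Q := fun x hx =>
          (hsA x (List.mem_cons_of_mem _ hx)).2 Q (hQrest x hx)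
        have hlen : rest.length = n := by simpa using hsl
        rw [hkey Q rest hrest hrA hlen]
        exact hB Q (hsA Q (List.mem_cons_self)).1
    intro s t hs ht hsA htA hsl htl
    rw [main s hs hsA hsl, main t ht htA htl]

end RowAux

/-- Rowbottom property: for every `F : [𝒫_κ(δ)]^{[<ω]} → 2` there is
`A ∈ U` such that for each `n`, `F` is constant on `[A]^{[n]}`. -/
theorem rowbottom (κ δ : Ordinal)
    (hκreg : κ.card.IsRegular) (hκunc : Cardinal.aleph0 < κ.card)
    (hκcard : κ.card.ord = κ) (hδcard : δ.card.ord = δ) (hκδ : κ ≤ δ)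
    (U : Set (Set (Pk κ δ))) (hU : IsSCMeasure κ δ U)
    (F : List (Pk κ δ) → Fin 2) :
    ∃ A ∈ U, ∀ s t : List (Pk κ δ), IncList κ δ s → IncList κ δ t →
      (∀ x ∈ s, x ∈ A) → (∀ x ∈ t, x ∈ A) → s.length = t.length → F s = F t := by
  classical
  choose An hAnU hAn using fun n => RowAux.claimN hκunc hκcard hκδ hU n F
  have hiA : (⋂ n, An n) ∈ U := by
    refine hU.complete ℕ An ?_ hAnU
    rw [Cardinal.mk_nat]
    exact hκunc
  refine ⟨⋂ n, An n, hiA, ?_⟩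
  intro s t hs ht hsA htA hlen
  exact hAn s.length s t hs ht
    (fun x hx => Set.mem_iInter.mp (hsA x hx) s.length)
    (fun x hx => Set.mem_iInter.mp (htA x hx) s.length) rfl hlen.symm
end
end

section
/- Let U be a δ-supercompactness measure for κ and let κ ≤ α < β < δ. Then U_β↓α = U_α, that is, {B↓α : B ∈ U_β} = {A↓α : A ∈ U}. -/
noncomputable section

open Set

theorem restrictP_restrictP {κ δ α β : Ordinal} (hαβ : α ≤ β) (P : Pk κ δ) :
    restrictP κ β α (restrictP κ δ β P) = restrictP κ δ α P :=
  Subtype.ext <| by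
    change (P.1 ∩ Iio β) ∩ Iio α = P.1 ∩ Iio α
    rw [inter_assoc, Iio_inter_Iio, min_eq_right hαβ]

theorem projSet_projSet {κ δ α β : Ordinal} (hαβ : α ≤ β) (A : Set (Pk κ δ)) :
    projSet κ β α (projSet κ δ β A) = projSet κ δ α A := by
  simp only [projSet, image_image, restrictP_restrictP hαβ]

theorem Uproj_trans_general (κ δ : Ordinal)
    (U : Set (Set (Pk κ δ)))
    (α β : Ordinal) (hαβ : α < β) :
    projSet κ β α '' Uproj κ δ β U = Uproj κ δ α U := by
  simp only [Uproj, image_image, projSet_projSet hαβ.le]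

/-- for `κ ≤ α < β < δ`, `U_β ↓ α = U_α`, i.e.
`{B↓α : B ∈ U_β} = {A↓α : A ∈ U}`. -/
theorem Uproj_trans (κ δ : Ordinal)
    (hκreg : κ.card.IsRegular) (hκunc : Cardinal.aleph0 < κ.card)
    (hκcard : κ.card.ord = κ) (hδcard : δ.card.ord = δ) (hκδ : κ ≤ δ)
    (U : Set (Set (Pk κ δ))) (hU : IsSCMeasure κ δ U)
    (α β : Ordinal) (hκα : κ ≤ α) (hαβ : α < β) (hβδ : β < δ) :
    projSet κ β α '' Uproj κ δ β U = Uproj κ δ α U :=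
  Uproj_trans_general κ δ U α β hαβ
end
end

section
/- Let U be a δ-supercompactness measure for κ and let κ ≤ α < δ. Then for every condition p ∈ ℙ_U, p↓α is a condition of ℙ_{U_α} (in particular, if s is a finite ⊏~-increasing sequence from 𝒫_κ(δ) then s↓α is a finite ⊏~-increasing sequence from 𝒫_κ(α)); moreover the map p ↦ p↓α is order-preserving: if p ≤ q in ℙ_U then p↓α ≤ q↓α in ℙ_{U_α}. -/
noncomputable section

open Set

lemma sinc_restrict {κ α : Ordinal} (hκα : κ ≤ α) {P Q : Set Ordinal}
    (h : SInc κ P Q) : SInc κ (P ∩ Set.Iio α) (Q ∩ Set.Iio α) := by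
  have hsub : P ∩ Set.Iio α ⊆ Q ∩ Set.Iio α :=
    Set.inter_subset_inter_left _ h.1.subset
  have heq : Q ∩ Set.Iio α ∩ Set.Iio κ = Q ∩ Set.Iio κ := by
    ext x
    simp only [Set.mem_inter_iff, Set.mem_Iio]
    exact ⟨fun ⟨⟨h1, _⟩, h3⟩ => ⟨h1, h3⟩,
      fun ⟨h1, h3⟩ => ⟨⟨h1, lt_of_lt_of_le h3 hκα⟩, h3⟩⟩
  have hcard : Cardinal.mk ↥(P ∩ Set.Iio α) <
      Cardinal.mk ↥(Q ∩ Set.Iio α ∩ Set.Iio κ) := by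
    rw [heq]
    exact lt_of_le_of_lt (Cardinal.mk_le_mk_of_subset Set.inter_subset_left) h.2
  refine ⟨⟨hsub, fun hba => ?_⟩, hcard⟩
  have hEq : Q ∩ Set.Iio α = P ∩ Set.Iio α := Set.Subset.antisymm hba hsub
  have h1 : Cardinal.mk ↥(Q ∩ Set.Iio α ∩ Set.Iio κ) ≤ Cardinal.mk ↥(P ∩ Set.Iio α) :=
    Cardinal.mk_le_mk_of_subset (by rw [← hEq]; exact Set.inter_subset_left)
  exact hcard.not_ge h1

lemma sinc_restrictP {κ δ α : Ordinal} (hκα : κ ≤ α) {P Q : Pk κ δ}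
    (h : SInc κ P.1 Q.1) :
    SInc κ (restrictP κ δ α P).1 (restrictP κ δ α Q).1 :=
  sinc_restrict hκα h

/-- for `κ ≤ α < δ`, the map `p ↦ p↓α` maps conditions of `ℙ_U` to
conditions of `ℙ_{U_α}` (in particular, projections of finite `⊏~`-increasing
sequences are finite `⊏~`-increasing sequences) and is order-preserving. -/
theorem condProj_isCond_and_mono (κ δ : Ordinal)
    (hκreg : κ.card.IsRegular) (hκunc : Cardinal.aleph0 < κ.card)
    (hκcard : κ.card.ord = κ) (hδcard : δ.card.ord = δ) (hκδ : κ ≤ δ)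
    (U : Set (Set (Pk κ δ))) (hU : IsSCMeasure κ δ U)
    (α : Ordinal) (hκα : κ ≤ α) (hαδ : α < δ) :
    (∀ p, IsCond κ δ U p → IsCond κ α (Uproj κ δ α U) (condProj κ δ α p)) ∧
      (∀ p q, IsCond κ δ U p → IsCond κ δ U q → CondLe p q →
        CondLe (condProj κ δ α p) (condProj κ δ α q)) := by
  constructor
  · rintro ⟨s, A⟩ ⟨hchain, hA, hlast⟩
    refine ⟨?_, ⟨A, hA, rfl⟩, ?_⟩
    · exact List.isChain_map_of_isChain (restrictP κ δ α)
        (fun _ _ h => sinc_restrictP hκα h) hchain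
    · intro hne Q hQ
      have hsne : s ≠ [] := fun h => hne (by simp [condProj, h])
      obtain ⟨Q0, hQ0, rfl⟩ := hQ
      have := hlast hsne Q0 hQ0
      have hget : (condProj κ δ α (s, A)).1.getLast hne =
          restrictP κ δ α (s.getLast hsne) := by
        simp only [condProj] at hne ⊢
        exact List.getLast_map (f := restrictP κ δ α) (l := s) hne
      rw [hget]
      exact sinc_restrictP hκα this
  · rintro ⟨s, A⟩ ⟨t, B⟩ _ _ ⟨hpre, hdrop, hsub⟩
    refine ⟨List.IsPrefix.map _ hpre, ?_, Set.image_mono hsub⟩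
    intro x hx
    simp only [condProj, List.length_map] at hx
    rw [← List.map_drop] at hx
    obtain ⟨y, hy, rfl⟩ := List.mem_map.mp hx
    exact ⟨y, hdrop y hy, rfl⟩
end
end

section
/- Let U be a δ-supercompactness measure for κ and let κ ≤ α < δ. Then for every condition p = (s, A) ∈ ℙ_U there is A' ∈ U with A' ⊆ A such that p' = (s, A') is α-nice (so p' ≤* p); consequently the set ℙ^α_U of α-nice conditions is dense in ℙ_U. -/
noncomputable section

open Set

section Lemmas
open Cardinal

variable {κ δ : Ordinal} {U : Set (Set (Pk κ δ))}

lemma U_univ (hU : IsSCMeasure κ δ U) (hκ0 : ℵ₀ < κ.card) :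
    (Set.univ : Set (Pk κ δ)) ∈ U := by
  have h := hU.complete Empty (fun i => i.elim)
    (by rw [Cardinal.mk_eq_zero]; exact aleph0_pos.trans hκ0) (fun i => i.elim)
  rwa [Set.iInter_of_empty] at h

lemma U_nonempty (hU : IsSCMeasure κ δ U) {A : Set (Pk κ δ)} (hA : A ∈ U) :
    A.Nonempty := by
  rcases Set.eq_empty_or_nonempty A with rfl | h
  · exact absurd hA hU.proper
  · exact h

lemma U_inter (hU : IsSCMeasure κ δ U) (hκ0 : ℵ₀ < κ.card) {A B : Set (Pk κ δ)}
    (hA : A ∈ U) (hB : B ∈ U) : A ∩ B ∈ U := by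
  have h := hU.complete Bool (fun b => if b then A else B)
    (by rw [Cardinal.mk_bool]; exact (nat_lt_aleph0 2).trans hκ0 |>.trans_le le_rfl)
    (by intro b; cases b <;> simpa)
  refine hU.upward h fun Q hQ => ?_
  have h1 := Set.mem_iInter.1 hQ true
  have h2 := Set.mem_iInter.1 hQ false
  simp only [if_true, if_false] at h1 h2
  exact ⟨h1, h2⟩

lemma U_compl (hU : IsSCMeasure κ δ U) {A : Set (Pk κ δ)} (hA : A ∉ U) : Aᶜ ∈ U :=
  (hU.ultra A).resolve_left hA

/-- Completeness indexed by ordinals below `o < κ`. -/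
lemma U_iInter_lt (hU : IsSCMeasure κ δ U) (hκcard : κ.card.ord = κ)
    {o : Ordinal} (ho : o < κ) (f : Ordinal → Set (Pk κ δ)) (hf : ∀ i < o, f i ∈ U) :
    {Q : Pk κ δ | ∀ i < o, Q ∈ f i} ∈ U := by
  have hcard : o.card < κ.card := by
    rw [← hκcard] at ho; exact Cardinal.lt_ord.1 ho
  have h := hU.complete o.ToType (fun i => f ((Ordinal.ToType.mk (o := o)).symm i).1)
    (by rw [Cardinal.mk_toType]; exact hcard)
    (fun i => hf _ ((Ordinal.ToType.mk (o := o)).symm i).2)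
  refine hU.upward h fun Q hQ i hi => ?_
  have := Set.mem_iInter.1 hQ (Ordinal.ToType.mk (o := o) ⟨i, hi⟩)
  simpa using this

/-- Fineness for small sets: almost every `Q` contains a fixed small subset of `δ`. -/
lemma U_superset (hU : IsSCMeasure κ δ U) (x : Set Ordinal) (hxδ : x ⊆ Set.Iio δ)
    (hx : Cardinal.mk ↥x < Cardinal.lift.{1,0} κ.card) :
    {Q : Pk κ δ | x ⊆ Q.1} ∈ U := by
  obtain ⟨c', hc'⟩ := Cardinal.lt_univ.1 (hx.trans (Cardinal.lift_lt_univ κ.card))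
  have hc'κ : c' < κ.card := by rwa [hc', Cardinal.lift_lt] at hx
  have hmk : Cardinal.mk (ULift.{1} c'.out) = Cardinal.mk ↥x := by
    rw [Cardinal.mk_uLift, Cardinal.mk_out, hc']
  obtain ⟨e⟩ := Cardinal.eq.1 hmk
  have h := hU.complete c'.out (fun i => {Q : Pk κ δ | ((e ⟨i⟩ : ↥x) : Ordinal) ∈ Q.1})
    (by rw [Cardinal.mk_out]; exact hc'κ)
    (fun i => hU.fine _ (hxδ (e ⟨i⟩).2))
  refine hU.upward h fun Q hQ ξ hξ => ?_
  have h3 := Set.mem_iInter.1 hQ (e.symm ⟨ξ, hξ⟩).down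
  have h4 : e ⟨(e.symm ⟨ξ, hξ⟩).down⟩ = ⟨ξ, hξ⟩ := by
    have h5 : (⟨(e.symm ⟨ξ, hξ⟩).down⟩ : ULift.{1} c'.out) = e.symm ⟨ξ, hξ⟩ := rfl
    rw [h5, Equiv.apply_symm_apply]
  rw [h4] at h3; exact h3

/-- Diagonal intersection. -/
lemma U_diag (hU : IsSCMeasure κ δ U) (hκ0 : ℵ₀ < κ.card)
    {A : Ordinal → Set (Pk κ δ)} (hA : ∀ ξ, A ξ ∈ U) :
    {Q : Pk κ δ | ∀ ξ ∈ Q.1, Q ∈ A ξ} ∈ U := by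
  by_contra h
  have hc : {Q : Pk κ δ | ∀ ξ ∈ Q.1, Q ∈ A ξ}ᶜ ∈ U := U_compl hU h
  have hex : ∀ Q ∈ {Q : Pk κ δ | ∀ ξ ∈ Q.1, Q ∈ A ξ}ᶜ, ∃ ξ, ξ ∈ Q.1 ∧ Q ∉ A ξ := by
    intro Q hQ
    simp only [Set.mem_compl_iff, Set.mem_setOf_eq, not_forall] at hQ
    obtain ⟨ξ, hξ, hnA⟩ := hQ
    exact ⟨ξ, hξ, hnA⟩
  choose! F hF1 hF2 using hex
  obtain ⟨B, hB, ξ₀, hconst⟩ := hU.normal _ hc F hF1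
  have hZ := U_inter hU hκ0 (U_inter hU hκ0 hB hc) (hA ξ₀)
  obtain ⟨Q, hQ⟩ := U_nonempty hU hZ
  have hFQ : F Q = ξ₀ := hconst Q hQ.1.1
  exact (hFQ ▸ hF2 Q hQ.1.2) hQ.2

end Lemmas

section Lemmas2
open Cardinal

variable {κ δ : Ordinal} {U : Set (Set (Pk κ δ))}

/-- Almost every `Q` has `|Q ∩ κ|` above any fixed cardinal that is `< κ`. -/
lemma U_kappaPart (hU : IsSCMeasure κ δ U) (hκ0 : ℵ₀ < κ.card) (hκcard : κ.card.ord = κ)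
    (hκδ : κ ≤ δ) (c : Cardinal.{1}) (hc : c < Cardinal.lift.{1,0} κ.card) :
    {Q : Pk κ δ | c < Cardinal.mk ↥(Q.1 ∩ Set.Iio κ)} ∈ U := by
  classical
  by_contra h
  have hS : {Q : Pk κ δ | Cardinal.mk ↥(Q.1 ∩ Set.Iio κ) ≤ c} ∈ U := by
    refine hU.upward (U_compl hU h) fun Q hQ => ?_
    simpa [not_lt] using hQ
  set S := {Q : Pk κ δ | Cardinal.mk ↥(Q.1 ∩ Set.Iio κ) ≤ c} with hSdef
  obtain ⟨d, hd⟩ := Cardinal.lt_univ.1 (hc.trans (Cardinal.lift_lt_univ κ.card))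
  have hdκ : d < κ.card := by rwa [hd, Cardinal.lift_lt] at hc
  set β := d.ord with hβ
  have hβκ : β < κ := by rw [← hκcard]; exact Cardinal.ord_lt_ord.2 hdκ
  have hIioβ : Cardinal.mk ↥(Set.Iio β) = c := by
    rw [Ordinal.mk_Iio_ordinal, Cardinal.card_ord, ← hd]
  have hinj : ∀ Q, Q ∈ S →
      Nonempty ((Q.1 ∩ Set.Iio κ : Set Ordinal) ↪ (Set.Iio β : Set Ordinal)) := by
    intro Q hQ
    rw [← Cardinal.le_def, hIioβ]
    exact hQ
  let embF : Pk κ δ → Ordinal → Ordinal := fun Q η =>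
    if h : Q ∈ S ∧ η ∈ Q.1 ∩ Set.Iio κ then ((Classical.choice (hinj Q h.1)) ⟨η, h.2⟩).1
    else 0
  have hemblt : ∀ Q (hQ : Q ∈ S) η (hη : η ∈ Q.1 ∩ Set.Iio κ), embF Q η < β := by
    intro Q hQ η hη
    simp only [embF, dif_pos (And.intro hQ hη)]
    exact (Classical.choice (hinj Q hQ) ⟨η, hη⟩).2
  have hembinj : ∀ Q, Q ∈ S → ∀ η η', η ∈ Q.1 ∩ Set.Iio κ → η' ∈ Q.1 ∩ Set.Iio κ →
      embF Q η = embF Q η' → η = η' := by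
    intro Q hQ η η' hη hη' heq
    simp only [embF, dif_pos (And.intro hQ hη), dif_pos (And.intro hQ hη')] at heq
    have := (Classical.choice (hinj Q hQ)).injective (Subtype.ext heq)
    exact congrArg Subtype.val this
  let Uset : Ordinal → Set (Pk κ δ) := fun ζ =>
    {Q | Q ∈ S ∧ ∃ η, ∃ _ : η ∈ Q.1 ∩ Set.Iio κ, embF Q η = ζ}
  let F : Ordinal → Pk κ δ → Ordinal := fun ζ Q =>
    if h : Q ∈ Uset ζ then Classical.choose h.2 else 0
  have hF1 : ∀ ζ, ∀ Q ∈ Uset ζ, F ζ Q ∈ Q.1 ∩ Set.Iio κ ∧ embF Q (F ζ Q) = ζ := by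
    intro ζ Q hQ
    simp only [F, dif_pos hQ]
    obtain ⟨hmem, hval⟩ := Classical.choose_spec hQ.2
    exact ⟨hmem, hval⟩
  have hnorm : ∀ ζ, ∃ V e, Uset ζ ∈ U → V ∈ U ∧ ∀ Q ∈ V, F ζ Q = e := by
    intro ζ
    by_cases hζ : Uset ζ ∈ U
    · obtain ⟨B, hB, e, he⟩ := hU.normal (Uset ζ) hζ (F ζ)
        (fun Q hQ => ((hF1 ζ Q hQ).1).1)
      exact ⟨B, e, fun _ => ⟨hB, he⟩⟩
    · exact ⟨Set.univ, 0, fun hh => absurd hh hζ⟩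
  choose V E hVE using hnorm
  let g : Ordinal → Set (Pk κ δ) := fun ζ => if Uset ζ ∈ U then V ζ else (Uset ζ)ᶜ
  have hg : ∀ ζ, g ζ ∈ U := by
    intro ζ
    by_cases hζ : Uset ζ ∈ U
    · simp only [g, if_pos hζ]; exact (hVE ζ hζ).1
    · simp only [g, if_neg hζ]; exact U_compl hU hζ
  have hbig : {Q : Pk κ δ | ∀ ζ < β, Q ∈ g ζ} ∈ U :=
    U_iInter_lt hU hκcard hβκ g (fun i _ => hg i)
  let Eset : Set Ordinal := {ξ | ∃ ζ, ζ < β ∧ Uset ζ ∈ U ∧ E ζ = ξ}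
  have hEsmall : Cardinal.mk ↥Eset < Cardinal.mk ↥(Set.Iio κ : Set Ordinal) := by
    have h1 : Eset ⊆ Set.range (fun z : ↥(Set.Iio β : Set Ordinal) => E z.1) := by
      rintro ξ ⟨ζ, hζβ, _, rfl⟩; exact ⟨⟨ζ, hζβ⟩, rfl⟩
    calc Cardinal.mk ↥Eset
        ≤ Cardinal.mk ↥(Set.range fun z : ↥(Set.Iio β : Set Ordinal) => E z.1) :=
          Cardinal.mk_le_mk_of_subset h1
      _ ≤ Cardinal.mk ↥(Set.Iio β : Set Ordinal) := Cardinal.mk_range_le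
      _ = c := hIioβ
      _ < Cardinal.lift.{1,0} κ.card := hc
      _ = Cardinal.mk ↥(Set.Iio κ : Set Ordinal) := (Ordinal.mk_Iio_ordinal κ).symm ▸ rfl
  obtain ⟨ξs, hξsκ, hξsE⟩ : ∃ ξ, ξ ∈ Set.Iio κ ∧ ξ ∉ Eset := by
    by_contra hcon; push_neg at hcon
    exact absurd (Cardinal.mk_le_mk_of_subset hcon) (not_le.2 hEsmall)
  have hfin : S ∩ {Q : Pk κ δ | ∀ ζ < β, Q ∈ g ζ} ∩ {Q : Pk κ δ | ξs ∈ Q.1} ∈ U :=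
    U_inter hU hκ0 (U_inter hU hκ0 hS hbig) (hU.fine ξs (lt_of_lt_of_le hξsκ hκδ))
  obtain ⟨Q₀, hQ₀⟩ := U_nonempty hU hfin
  obtain ⟨⟨hQ₀S, hQ₀g⟩, hQ₀ξ⟩ := hQ₀
  have hmem : ξs ∈ Q₀.1 ∩ Set.Iio κ := ⟨hQ₀ξ, hξsκ⟩
  set ζs := embF Q₀ ξs with hζs
  have hζsβ : ζs < β := hemblt Q₀ hQ₀S ξs hmem
  have hQ₀U : Q₀ ∈ Uset ζs := ⟨hQ₀S, ξs, hmem, rfl⟩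
  have hdef : Uset ζs ∈ U := by
    by_contra hnd
    have hh := hQ₀g ζs hζsβ
    simp only [g, if_neg hnd] at hh
    exact hh hQ₀U
  have hQ₀V : Q₀ ∈ V ζs := by
    have hh := hQ₀g ζs hζsβ
    simp only [g, if_pos hdef] at hh
    exact hh
  have hFE : F ζs Q₀ = E ζs := (hVE ζs hdef).2 Q₀ hQ₀V
  have hFspec := hF1 ζs Q₀ hQ₀U
  have hFξ : F ζs Q₀ = ξs := hembinj Q₀ hQ₀S _ _ hFspec.1 hmem (by rw [hFspec.2])
  exact hξsE ⟨ζs, hζsβ, hdef, by rw [← hFE, hFξ]⟩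

end Lemmas2

section Lemmas3
open Cardinal
open scoped Classical

/-- The transfinite pressing-down enumeration used in `U_pressing`. -/
private def pressC (κ δ : Ordinal) (U : Set (Set (Pk κ δ))) (hU : IsSCMeasure κ δ U)
    (A₀ : Set (Pk κ δ)) (f : Pk κ δ → Set Ordinal) (hf1 : ∀ Q ∈ A₀, f Q ⊆ Q.1) :
    Ordinal.{0} → Ordinal.{0} :=
  WellFounded.fix Ordinal.lt_wf (fun j rec =>
    if h : {Q | Q ∈ A₀ ∧ (f Q \ {ξ | ∃ j', ∃ hj : j' < j, rec j' hj = ξ}).Nonempty} ∈ U then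
      Classical.choose (Classical.choose_spec (hU.normal _ h
        (fun Q => sInf (f Q \ {ξ | ∃ j', ∃ hj : j' < j, rec j' hj = ξ}))
        (fun Q hQ => hf1 Q hQ.1 (csInf_mem hQ.2).1))).2
    else 0)

variable {κ δ : Ordinal} {U : Set (Set (Pk κ δ))}

private def pressS (hU : IsSCMeasure κ δ U) (A₀ : Set (Pk κ δ)) (f : Pk κ δ → Set Ordinal)
    (hf1 : ∀ Q ∈ A₀, f Q ⊆ Q.1) (j : Ordinal.{0}) : Set Ordinal :=
  {ξ | ∃ j', ∃ _ : j' < j, pressC κ δ U hU A₀ f hf1 j' = ξ}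

private def pressE (hU : IsSCMeasure κ δ U) (A₀ : Set (Pk κ δ)) (f : Pk κ δ → Set Ordinal)
    (hf1 : ∀ Q ∈ A₀, f Q ⊆ Q.1) (j : Ordinal.{0}) : Set (Pk κ δ) :=
  {Q | Q ∈ A₀ ∧ (f Q \ pressS hU A₀ f hf1 j).Nonempty}

private def pressF (hU : IsSCMeasure κ δ U) (A₀ : Set (Pk κ δ)) (f : Pk κ δ → Set Ordinal)
    (hf1 : ∀ Q ∈ A₀, f Q ⊆ Q.1) (j : Ordinal.{0}) (Q : Pk κ δ) : Ordinal :=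
  sInf (f Q \ pressS hU A₀ f hf1 j)

private lemma pressF_mem (hU : IsSCMeasure κ δ U) (A₀ : Set (Pk κ δ))
    (f : Pk κ δ → Set Ordinal) (hf1 : ∀ Q ∈ A₀, f Q ⊆ Q.1) (j : Ordinal.{0}) :
    ∀ Q ∈ pressE hU A₀ f hf1 j, pressF hU A₀ f hf1 j Q ∈ Q.1 :=
  fun Q hQ => hf1 Q hQ.1 (csInf_mem hQ.2).1

private lemma pressC_eq (hU : IsSCMeasure κ δ U) (A₀ : Set (Pk κ δ))
    (f : Pk κ δ → Set Ordinal) (hf1 : ∀ Q ∈ A₀, f Q ⊆ Q.1) (j : Ordinal.{0}) :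
    pressC κ δ U hU A₀ f hf1 j =
      if h : pressE hU A₀ f hf1 j ∈ U then
        Classical.choose (Classical.choose_spec (hU.normal _ h (pressF hU A₀ f hf1 j)
          (pressF_mem hU A₀ f hf1 j))).2
      else 0 := by
  show WellFounded.fix _ _ j = _
  rw [WellFounded.fix_eq]
  rfl

end Lemmas3

section Lemmas4
open Cardinal
open scoped Classical

variable {κ δ : Ordinal} {U : Set (Set (Pk κ δ))}

/-- Pressing down small subsets: a function selecting a small subset of `Q` on a
measure one set is constant on a measure one set. -/
lemma U_pressing (hU : IsSCMeasure κ δ U) (hκ0 : ℵ₀ < κ.card) (hκcard : κ.card.ord = κ)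
    {A₀ : Set (Pk κ δ)} (hA₀ : A₀ ∈ U) (f : Pk κ δ → Set Ordinal)
    (hf1 : ∀ Q ∈ A₀, f Q ⊆ Q.1)
    (hf2 : ∀ Q ∈ A₀, Cardinal.mk ↥(f Q) < Cardinal.mk ↥(Q.1 ∩ Set.Iio κ)) :
    ∃ x G, G ∈ U ∧ G ⊆ A₀ ∧ ∀ Q ∈ G, f Q = x := by
  classical
  have hW : ∀ j : Ordinal.{0}, ∃ W : Set (Pk κ δ), pressE hU A₀ f hf1 j ∈ U →
      (W ∈ U ∧ W ⊆ pressE hU A₀ f hf1 j ∧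
        ∀ Q ∈ W, pressF hU A₀ f hf1 j Q = pressC κ δ U hU A₀ f hf1 j) := by
    intro j
    by_cases hj : pressE hU A₀ f hf1 j ∈ U
    · refine ⟨Classical.choose (hU.normal _ hj (pressF hU A₀ f hf1 j)
        (pressF_mem hU A₀ f hf1 j)) ∩ pressE hU A₀ f hf1 j, fun _ => ?_⟩
      refine ⟨U_inter hU hκ0 (Classical.choose_spec (hU.normal _ hj (pressF hU A₀ f hf1 j)
        (pressF_mem hU A₀ f hf1 j))).1 hj, Set.inter_subset_right, ?_⟩
      intro Q hQ
      rw [pressC_eq hU A₀ f hf1 j, dif_pos hj]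
      exact Classical.choose_spec (Classical.choose_spec (hU.normal _ hj
        (pressF hU A₀ f hf1 j) (pressF_mem hU A₀ f hf1 j))).2 Q hQ.1
    · exact ⟨Set.univ, fun h => absurd h hj⟩
  choose Wst hWst using hW
  have hcmem : ∀ j, pressE hU A₀ f hf1 j ∈ U → ∀ Q ∈ Wst j,
      pressC κ δ U hU A₀ f hf1 j ∈ f Q ∧
      pressC κ δ U hU A₀ f hf1 j ∉ pressS hU A₀ f hf1 j := by
    intro j hj Q hQ
    have h1 := (hWst j hj).2.2 Q hQ
    have h2 : Q ∈ pressE hU A₀ f hf1 j := (hWst j hj).2.1 hQ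
    have h3 := csInf_mem h2.2
    rw [show sInf (f Q \ pressS hU A₀ f hf1 j) = pressF hU A₀ f hf1 j Q from rfl, h1] at h3
    exact ⟨h3.1, h3.2⟩
  have hcinj : ∀ j j', j' < j → pressE hU A₀ f hf1 j ∈ U → pressE hU A₀ f hf1 j' ∈ U →
      pressC κ δ U hU A₀ f hf1 j ≠ pressC κ δ U hU A₀ f hf1 j' := by
    intro j j' hlt hj hj' heq
    obtain ⟨Q, hQ⟩ := U_nonempty hU (hWst j hj).1
    exact (hcmem j hj Q hQ).2 ⟨j', hlt, heq.symm⟩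
  by_cases hall : ∀ j, j < κ → pressE hU A₀ f hf1 j ∈ U
  · exfalso
    have hcδ : ∀ j, j < κ → pressC κ δ U hU A₀ f hf1 j < δ := by
      intro j hj
      obtain ⟨Q, hQ⟩ := U_nonempty hU (hWst j (hall j hj)).1
      have h1 := (hcmem j (hall j hj) Q hQ).1
      exact Q.2.1 (hf1 Q ((hWst j (hall j hj)).2.1 hQ).1 h1)
    have hg₁ : ∀ ξ : Ordinal, (if h : ξ < κ then {Q : Pk κ δ | pressC κ δ U hU A₀ f hf1 ξ ∈ Q.1}
        else Set.univ) ∈ U := by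
      intro ξ; by_cases h : ξ < κ
      · rw [dif_pos h]; exact hU.fine _ (hcδ ξ h)
      · rw [dif_neg h]; exact U_univ hU hκ0
    have hg₂ : ∀ ξ : Ordinal, (if h : ∃ j, j < κ ∧ pressC κ δ U hU A₀ f hf1 j = ξ
        then Wst h.choose else Set.univ) ∈ U := by
      intro ξ; by_cases h : ∃ j, j < κ ∧ pressC κ δ U hU A₀ f hf1 j = ξ
      · rw [dif_pos h]; exact (hWst _ (hall _ h.choose_spec.1)).1
      · rw [dif_neg h]; exact U_univ hU hκ0
    have hD₁ := U_diag hU hκ0 hg₁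
    have hD₂ := U_diag hU hκ0 hg₂
    obtain ⟨Q₀, ⟨hQ₀A, hQ₀D₁⟩, hQ₀D₂⟩ :=
      U_nonempty hU (U_inter hU hκ0 (U_inter hU hκ0 hA₀ hD₁) hD₂)
    have hkey : ∀ η, η ∈ Q₀.1 ∩ Set.Iio κ → pressC κ δ U hU A₀ f hf1 η ∈ f Q₀ := by
      intro η hη
      have h1 : pressC κ δ U hU A₀ f hf1 η ∈ Q₀.1 := by
        have h := hQ₀D₁ η hη.1
        rwa [dif_pos (show η < κ from hη.2)] at h
      have h2 : ∃ j, j < κ ∧ pressC κ δ U hU A₀ f hf1 j = pressC κ δ U hU A₀ f hf1 η :=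
        ⟨η, hη.2, rfl⟩
      have h3 := hQ₀D₂ _ h1
      rw [dif_pos h2] at h3
      have h4 : h2.choose = η := by
        by_contra hne
        rcases lt_or_gt_of_ne hne with hlt | hgt
        · exact hcinj η h2.choose hlt (hall _ hη.2) (hall _ h2.choose_spec.1)
            h2.choose_spec.2.symm
        · exact hcinj h2.choose η hgt (hall _ h2.choose_spec.1) (hall _ hη.2)
            h2.choose_spec.2
      rw [h4] at h3
      exact (hcmem η (hall η hη.2) Q₀ h3).1
    have hinj2 : Function.Injective
        (fun z : ↥(Q₀.1 ∩ Set.Iio κ) =>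
          (⟨pressC κ δ U hU A₀ f hf1 z.1, hkey z.1 z.2⟩ : ↥(f Q₀))) := by
      intro z z' hzz
      have h5 : pressC κ δ U hU A₀ f hf1 z.1 = pressC κ δ U hU A₀ f hf1 z'.1 :=
        congrArg Subtype.val hzz
      have h6 : z.1 = z'.1 := by
        by_contra hne
        rcases lt_or_gt_of_ne hne with hlt | hgt
        · exact hcinj z'.1 z.1 hlt (hall _ z'.2.2) (hall _ z.2.2) h5.symm
        · exact hcinj z.1 z'.1 hgt (hall _ z.2.2) (hall _ z'.2.2) h5
      exact Subtype.ext h6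
    exact absurd (Cardinal.mk_le_of_injective hinj2) (hf2 Q₀ hQ₀A).not_ge
  · push_neg at hall
    obtain ⟨j₁, hj₁κ, hj₁⟩ := hall
    have hne : {j : Ordinal | pressE hU A₀ f hf1 j ∉ U}.Nonempty := ⟨j₁, hj₁⟩
    set j₀ := sInf {j : Ordinal | pressE hU A₀ f hf1 j ∉ U} with hj₀
    have hj₀mem : pressE hU A₀ f hf1 j₀ ∉ U := csInf_mem hne
    have hj₀κ : j₀ < κ := lt_of_le_of_lt (csInf_le' hj₁) hj₁κ
    have hmin : ∀ j' < j₀, pressE hU A₀ f hf1 j' ∈ U := by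
      intro j' hj'
      by_contra hcon
      exact hj'.not_ge (csInf_le' (s := {j : Ordinal | pressE hU A₀ f hf1 j ∉ U}) hcon)
    have hGU : A₀ ∩ ((pressE hU A₀ f hf1 j₀)ᶜ) ∩ {Q | ∀ i < j₀, Q ∈ Wst i} ∈ U :=
      U_inter hU hκ0 (U_inter hU hκ0 hA₀ (U_compl hU hj₀mem))
        (U_iInter_lt hU hκcard hj₀κ Wst (fun i hi => (hWst i (hmin i hi)).1))
    refine ⟨pressS hU A₀ f hf1 j₀, _, hGU, fun Q hQ => hQ.1.1, ?_⟩
    rintro Q ⟨⟨hQA, hQE⟩, hQW⟩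
    apply Set.Subset.antisymm
    · have h7 : ¬ (f Q \ pressS hU A₀ f hf1 j₀).Nonempty := fun hcon => hQE ⟨hQA, hcon⟩
      rw [Set.not_nonempty_iff_eq_empty, Set.diff_eq_empty] at h7
      exact h7
    · rintro ξ ⟨i, hi, rfl⟩
      exact (hcmem i (hmin i hi) Q (hQW i hi)).1

end Lemmas4

section Good
open Cardinal
open scoped Classical

/-- The recursive "goodness" predicate: `Q` is good if any strictly smaller trace on `α`
which is the trace of a good set and is strongly below `Q`'s trace can be lifted to a good
set strongly included in `Q`. The recursion is on the cardinality of the trace. -/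
private def auxGood (κ δ α : Ordinal.{0}) (A : Set (Pk κ δ)) : Cardinal.{1} → Pk κ δ → Prop :=
  WellFounded.fix Cardinal.lt_wf (fun c rec Q =>
    Q ∈ A ∧ ∀ x : Set Ordinal, x ⊂ Q.1 ∩ Set.Iio α →
      Cardinal.mk ↥x < Cardinal.mk ↥(Q.1 ∩ Set.Iio κ) →
      ∀ h₃ : Cardinal.mk ↥x < c,
      (∃ R' : Pk κ δ, rec (Cardinal.mk ↥x) h₃ R' ∧ R'.1 ∩ Set.Iio α = x) →
      ∃ R'' : Pk κ δ, rec (Cardinal.mk ↥x) h₃ R'' ∧ R''.1 ∩ Set.Iio α = x ∧ SInc κ R''.1 Q.1)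

def Good (κ δ α : Ordinal.{0}) (A : Set (Pk κ δ)) (Q : Pk κ δ) : Prop :=
  auxGood κ δ α A (Cardinal.mk ↥(Q.1 ∩ Set.Iio α)) Q

private lemma auxGood_eq (κ δ α : Ordinal.{0}) (A : Set (Pk κ δ)) (c : Cardinal.{1}) :
    auxGood κ δ α A c = fun Q =>
      (Q ∈ A ∧ ∀ x : Set Ordinal, x ⊂ Q.1 ∩ Set.Iio α →
        Cardinal.mk ↥x < Cardinal.mk ↥(Q.1 ∩ Set.Iio κ) →
        ∀ _ : Cardinal.mk ↥x < c,
        (∃ R' : Pk κ δ, auxGood κ δ α A (Cardinal.mk ↥x) R' ∧ R'.1 ∩ Set.Iio α = x) →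
        ∃ R'' : Pk κ δ, auxGood κ δ α A (Cardinal.mk ↥x) R'' ∧ R''.1 ∩ Set.Iio α = x ∧
          SInc κ R''.1 Q.1) := by
  show WellFounded.fix _ _ c = _
  rw [WellFounded.fix_eq]
  rfl

lemma good_iff {κ δ α : Ordinal.{0}} (hκα : κ ≤ α) (A : Set (Pk κ δ)) (Q : Pk κ δ) :
    Good κ δ α A Q ↔
      Q ∈ A ∧ ∀ x : Set Ordinal, x ⊂ Q.1 ∩ Set.Iio α →
        Cardinal.mk ↥x < Cardinal.mk ↥(Q.1 ∩ Set.Iio κ) →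
        (∃ R', Good κ δ α A R' ∧ R'.1 ∩ Set.Iio α = x) →
        ∃ R'', Good κ δ α A R'' ∧ R''.1 ∩ Set.Iio α = x ∧ SInc κ R''.1 Q.1 := by
  have hsub : Q.1 ∩ Set.Iio κ ⊆ Q.1 ∩ Set.Iio α :=
    fun a ha => ⟨ha.1, lt_of_lt_of_le ha.2 hκα⟩
  constructor
  · intro h
    rw [Good, auxGood_eq] at h
    refine ⟨h.1, fun x h1 h2 hex => ?_⟩
    have h₃ : Cardinal.mk ↥x < Cardinal.mk ↥(Q.1 ∩ Set.Iio α) :=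
      lt_of_lt_of_le h2 (Cardinal.mk_le_mk_of_subset hsub)
    obtain ⟨R', hR', htr⟩ := hex
    have hR'2 : auxGood κ δ α A (Cardinal.mk ↥x) R' := by
      rw [Good] at hR'; rwa [htr] at hR'
    obtain ⟨R'', hR'', htr'', hsinc⟩ := h.2 x h1 h2 h₃ ⟨R', hR'2, htr⟩
    refine ⟨R'', ?_, htr'', hsinc⟩
    rw [Good, htr'']
    exact hR''
  · intro h
    rw [Good, auxGood_eq]
    refine ⟨h.1, fun x h1 h2 h₃ hex => ?_⟩
    obtain ⟨R', hR', htr⟩ := hex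
    have hR'g : Good κ δ α A R' := by rw [Good, htr]; exact hR'
    obtain ⟨R'', hR''g, htr'', hsinc⟩ := h.2 x h1 h2 ⟨R', hR'g, htr⟩
    refine ⟨R'', ?_, htr'', hsinc⟩
    rw [Good, htr''] at hR''g
    exact hR''g

lemma good_mem {κ δ : Ordinal.{0}} {U : Set (Set (Pk κ δ))} (hU : IsSCMeasure κ δ U)
    (hκ0 : ℵ₀ < κ.card) (hκcard : κ.card.ord = κ) (hκδ : κ ≤ δ)
    (α : Ordinal.{0}) (hκα : κ ≤ α)
    {A : Set (Pk κ δ)} (hA : A ∈ U) : {Q | Good κ δ α A Q} ∈ U := by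
  classical
  by_contra hbad
  have hN : A ∩ {Q | Good κ δ α A Q}ᶜ ∈ U := U_inter hU hκ0 hA (U_compl hU hbad)
  have hex : ∀ Q, Q ∈ A ∩ {Q | Good κ δ α A Q}ᶜ → ∃ x : Set Ordinal,
      x ⊂ Q.1 ∩ Set.Iio α ∧ Cardinal.mk ↥x < Cardinal.mk ↥(Q.1 ∩ Set.Iio κ) ∧
      (∃ R', Good κ δ α A R' ∧ R'.1 ∩ Set.Iio α = x) ∧
      ¬∃ R'', Good κ δ α A R'' ∧ R''.1 ∩ Set.Iio α = x ∧ SInc κ R''.1 Q.1 := by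
    intro Q hQ
    have hng : ¬ Good κ δ α A Q := hQ.2
    by_contra hcon
    push_neg at hcon
    exact hng ((good_iff hκα A Q).2 ⟨hQ.1, fun x hx1 hx2 hx3 => hcon x hx1 hx2 hx3⟩)
  choose! fx h1 h2 h3 h4 using hex
  obtain ⟨xb, G, hGU, hGN, hconst⟩ := U_pressing hU hκ0 hκcard hN fx
    (fun Q hQ => subset_trans (h1 Q hQ).subset Set.inter_subset_left)
    (fun Q hQ => h2 Q hQ)
  obtain ⟨Q₁, hQ₁⟩ := U_nonempty hU hGU
  obtain ⟨Rb, hRbG, hRbtr⟩ : ∃ R', Good κ δ α A R' ∧ R'.1 ∩ Set.Iio α = xb := by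
    have h5 := h3 Q₁ (hGN hQ₁)
    rwa [hconst Q₁ hQ₁] at h5
  obtain ⟨ξ₀, hξ₀δ, hξ₀R⟩ : ∃ ξ₀, ξ₀ < δ ∧ ξ₀ ∉ Rb.1 := by
    by_contra hcon
    push_neg at hcon
    have hsub : Set.Iio δ ⊆ Rb.1 := fun ξ hξ => hcon ξ hξ
    have hle := Cardinal.mk_le_mk_of_subset hsub
    rw [Ordinal.mk_Iio_ordinal] at hle
    have h9 : Cardinal.lift.{1,0} κ.card ≤ Cardinal.lift.{1,0} δ.card :=
      Cardinal.lift_le.2 (Ordinal.card_le_card hκδ)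
    exact (lt_of_lt_of_le Rb.2.2 h9).not_ge hle
  have hZ : (A ∩ {Q | Good κ δ α A Q}ᶜ) ∩ G ∩ {Q : Pk κ δ | Rb.1 ⊆ Q.1} ∩
      {Q : Pk κ δ | Cardinal.mk ↥(Rb.1) < Cardinal.mk ↥(Q.1 ∩ Set.Iio κ)} ∩
      {Q : Pk κ δ | ξ₀ ∈ Q.1} ∈ U := by
    refine U_inter hU hκ0 (U_inter hU hκ0 (U_inter hU hκ0 (U_inter hU hκ0 hN hGU) ?_) ?_) ?_
    · exact U_superset hU Rb.1 Rb.2.1 Rb.2.2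
    · exact U_kappaPart hU hκ0 hκcard hκδ _ Rb.2.2
    · exact hU.fine ξ₀ hξ₀δ
  obtain ⟨Qs, hQs⟩ := U_nonempty hU hZ
  obtain ⟨⟨⟨⟨hQsN, hQsG⟩, hQssub⟩, hQsmk⟩, hQsξ⟩ := hQs
  refine h4 Qs hQsN ⟨Rb, hRbG, ?_, ?_⟩
  · rw [hconst Qs hQsG]; exact hRbtr
  · exact ⟨⟨hQssub, fun hsub2 => hξ₀R (hsub2 hQsξ)⟩, hQsmk⟩

end Good

section Lift
open Cardinal

variable {κ δ α : Ordinal.{0}} {A : Set (Pk κ δ)}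

private lemma inter_Iio_kappa (hκα : κ ≤ α) (s : Set Ordinal) :
    (s ∩ Set.Iio α) ∩ Set.Iio κ = s ∩ Set.Iio κ := by
  rw [Set.inter_assoc, Set.Iio_inter_Iio, min_eq_right hκα]

/-- Lifting a `⊏~`-increasing chain of traces of good sets to a chain of good sets
sitting strongly below a given good set. -/
private lemma good_lift (hκα : κ ≤ α) :
    ∀ t : List (Pk κ α), IncList κ α t →
      (∀ x ∈ t, ∃ Q : Pk κ δ, Good κ δ α A Q ∧ Q.1 ∩ Set.Iio α = x.1) →
      ∀ R : Pk κ δ, Good κ δ α A R →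
      (∀ h : t ≠ [], SInc κ (t.getLast h).1 (R.1 ∩ Set.Iio α)) →
      ∃ r : List (Pk κ δ), IncList κ δ r ∧ (∀ Z ∈ r, Good κ δ α A Z) ∧
        r.map (restrictP κ δ α) = t ∧
        ∀ h' : r ≠ [], SInc κ (r.getLast h').1 R.1 := by
  intro t
  induction t using List.reverseRecOn with
  | nil =>
    intro _ _ R _ _
    exact ⟨[], List.isChain_nil, by simp, by simp, fun h => absurd rfl h⟩
  | append_singleton t x IH =>
    intro hinc hents R hGR hlast
    have hne : t ++ [x] ≠ [] := by simp
    have hlastx : (t ++ [x]).getLast hne = x := by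
      rw [List.getLast_append_of_ne_nil (h₂ := (by simp : ([x] : List (Pk κ α)) ≠ []))]
      rfl
    have hx : SInc κ x.1 (R.1 ∩ Set.Iio α) := by
      have h := hlast hne; rwa [hlastx] at h
    have hiff := (good_iff hκα A R).1 hGR
    have hmkx : Cardinal.mk ↥(x.1) < Cardinal.mk ↥(R.1 ∩ Set.Iio κ) := by
      have h2 := hx.2
      rwa [inter_Iio_kappa hκα] at h2
    obtain ⟨Qx, hQxG, hQxtr⟩ := hents x (by simp)
    obtain ⟨Rx, hRxG, hRxtr, hRxsinc⟩ := hiff.2 x.1 hx.1 hmkx ⟨Qx, hQxG, hQxtr⟩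
    obtain ⟨hchainT, -, hrel⟩ := List.isChain_append.1 hinc
    have hentsT : ∀ y ∈ t, ∃ Q : Pk κ δ, Good κ δ α A Q ∧ Q.1 ∩ Set.Iio α = y.1 :=
      fun y hy => hents y (List.mem_append_left _ hy)
    have hlastT : ∀ h : t ≠ [], SInc κ (t.getLast h).1 (Rx.1 ∩ Set.Iio α) := by
      intro h
      rw [hRxtr]
      exact hrel _ (List.getLast?_eq_getLast h) _ rfl
    obtain ⟨r', hr'inc, hr'good, hr'map, hr'last⟩ := IH hchainT hentsT Rx hRxG hlastT
    refine ⟨r' ++ [Rx], ?_, ?_, ?_, ?_⟩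
    · refine List.isChain_append.2 ⟨hr'inc, List.isChain_singleton _, ?_⟩
      intro a ha b hb
      have hr'ne : r' ≠ [] := by rintro rfl; simp at ha
      have ha' : r'.getLast hr'ne = a := by
        rw [List.getLast?_eq_getLast hr'ne] at ha
        simpa using ha
      have hb' : Rx = b := by simpa using hb
      rw [← ha', ← hb']
      exact hr'last hr'ne
    · intro Z hZ
      rcases List.mem_append.1 hZ with h | h
      · exact hr'good Z h
      · rw [List.mem_singleton.1 h]; exact hRxG
    · rw [List.map_append, hr'map]
      congr 1
      simp only [List.map_cons, List.map_nil]
      congr 1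
      exact Subtype.ext hRxtr
    · intro h'
      rw [List.getLast_append_of_ne_nil (h₂ := (by simp : ([Rx] : List (Pk κ δ)) ≠ []))]
      exact hRxsinc

end Lift

section Main
open Cardinal

theorem nice_dense' (κ δ : Ordinal)
    (hκunc : Cardinal.aleph0 < κ.card)
    (hκcard : κ.card.ord = κ) (hκδ : κ ≤ δ)
    (U : Set (Set (Pk κ δ))) (hU : IsSCMeasure κ δ U)
    (α : Ordinal) (hκα : κ ≤ α) (hαδ : α < δ) :
    (∀ p, IsCond κ δ U p → ∃ A' ∈ U, A' ⊆ p.2 ∧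
        IsCond κ δ U (p.1, A') ∧ IsNice κ δ α (p.1, A')) ∧
      (∀ p, IsCond κ δ U p →
        ∃ p', IsCond κ δ U p' ∧ IsNice κ δ α p' ∧ CondLe p' p) := by
  have main : ∀ p, IsCond κ δ U p → ∃ A' ∈ U, A' ⊆ p.2 ∧
      IsCond κ δ U (p.1, A') ∧ IsNice κ δ α (p.1, A') := by
    intro p hp
    have hA'U : {Q | Good κ δ α p.2 Q} ∈ U := good_mem hU hκunc hκcard hκδ α hκα hp.2.1
    have hsub : {Q | Good κ δ α p.2 Q} ⊆ p.2 := fun Q hQ => ((good_iff hκα p.2 Q).1 hQ).1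
    refine ⟨{Q | Good κ δ α p.2 Q}, hA'U, hsub,
      ⟨hp.1, hA'U, fun hne Q hQ => hp.2.2 hne Q (hsub hQ)⟩, ?_⟩
    intro t hinc hents
    have hents' : ∀ x ∈ t, ∃ Q : Pk κ δ, Good κ δ α p.2 Q ∧ Q.1 ∩ Set.Iio α = x.1 := by
      intro x hx
      obtain ⟨Q, hQ, hQeq⟩ := hents x hx
      exact ⟨Q, hQ, congrArg Subtype.val hQeq⟩
    rcases List.eq_nil_or_concat' t with rfl | ⟨t', x, rfl⟩
    · exact ⟨[], List.isChain_nil, by simp, by simp⟩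
    · obtain ⟨Qx, hQxG, hQxtr⟩ := hents' x (by simp)
      obtain ⟨hchainT, -, hrel⟩ := List.isChain_append.1 hinc
      have hentsT : ∀ y ∈ t', ∃ Q : Pk κ δ, Good κ δ α p.2 Q ∧ Q.1 ∩ Set.Iio α = y.1 :=
        fun y hy => hents' y (List.mem_append_left _ hy)
      have hlastT : ∀ h : t' ≠ [], SInc κ (t'.getLast h).1 (Qx.1 ∩ Set.Iio α) := by
        intro h
        rw [hQxtr]
        exact hrel _ (List.getLast?_eq_getLast h) _ rfl
      obtain ⟨r', hr'inc, hr'good, hr'map, hr'last⟩ :=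
        good_lift hκα t' hchainT hentsT Qx hQxG hlastT
      refine ⟨r' ++ [Qx], ?_, ?_, ?_⟩
      · refine List.isChain_append.2 ⟨hr'inc, List.isChain_singleton _, ?_⟩
        intro a ha b hb
        have hr'ne : r' ≠ [] := by rintro rfl; simp at ha
        have ha' : r'.getLast hr'ne = a := by
          rw [List.getLast?_eq_getLast hr'ne] at ha
          simpa using ha
        have hb' : Qx = b := by simpa using hb
        rw [← ha', ← hb']
        exact hr'last hr'ne
      · intro Z hZ
        rcases List.mem_append.1 hZ with h | h
        · exact hr'good Z h
        · rw [List.mem_singleton.1 h]; exact hQxG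
      · rw [List.map_append, hr'map]
        congr 1
        simp only [List.map_cons, List.map_nil]
        congr 1
        exact Subtype.ext hQxtr
  refine ⟨main, ?_⟩
  intro p hp
  obtain ⟨A', hA'U, hsub, hcond, hnice⟩ := main p hp
  refine ⟨(p.1, A'), hcond, hnice, List.prefix_refl _, ?_, hsub⟩
  intro x hx
  rw [List.drop_length] at hx
  simp at hx

end Main

/-- for `κ ≤ α < δ`, every condition `p = (s, A) ∈ ℙ_U` has a direct
extension `p' = (s, A')` (with `A' ∈ U`, `A' ⊆ A`) that is `α`-nice; consequently
the set `ℙ^α_U` of `α`-nice conditions is dense in `ℙ_U`. -/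
theorem nice_dense (κ δ : Ordinal)
    (hκreg : κ.card.IsRegular) (hκunc : Cardinal.aleph0 < κ.card)
    (hκcard : κ.card.ord = κ) (hδcard : δ.card.ord = δ) (hκδ : κ ≤ δ)
    (U : Set (Set (Pk κ δ))) (hU : IsSCMeasure κ δ U)
    (α : Ordinal) (hκα : κ ≤ α) (hαδ : α < δ) :
    (∀ p, IsCond κ δ U p → ∃ A' ∈ U, A' ⊆ p.2 ∧
        IsCond κ δ U (p.1, A') ∧ IsNice κ δ α (p.1, A')) ∧
      (∀ p, IsCond κ δ U p →
        ∃ p', IsCond κ δ U p' ∧ IsNice κ δ α p' ∧ CondLe p' p) := by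
  exact nice_dense' κ δ hκunc hκcard hκδ U hU α hκα hαδ
end
end

section
/- Let U be a δ-supercompactness measure for κ and let f : δ → δ be a bijection with f(ξ) = ξ for all ξ < κ. Then π_f maps conditions of ℙ_U to conditions of ℙ_U and is an order-automorphism of ℙ_U, with inverse π_{ف⁻¹} = π_{f⁻¹}. -/
noncomputable section

open Set

private lemma measure_inter {κ δ : Ordinal} {U : Set (Set (Pk κ δ))}
    (hU : IsSCMeasure κ δ U) (hκunc : Cardinal.aleph0 < κ.card)
    {A B : Set (Pk κ δ)} (hA : A ∈ U) (hB : B ∈ U) : A ∩ B ∈ U := by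
  have h := hU.complete Bool (fun b => bif b then A else B)
    (by
      rw [Cardinal.mk_bool]
      exact lt_trans (by exact_mod_cast Cardinal.nat_lt_aleph0 2) hκunc)
    (by rintro (_|_) <;> simpa)
  have heq : (⋂ b : Bool, bif b then A else B) = A ∩ B := by
    ext x; simp [Bool.forall_bool, and_comm]
  rwa [heq] at h

private lemma measure_nonempty {κ δ : Ordinal} {U : Set (Set (Pk κ δ))}
    (hU : IsSCMeasure κ δ U) {A : Set (Pk κ δ)} (hA : A ∈ U) : A.Nonempty := by
  rcases A.eq_empty_or_nonempty with rfl | h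
  · exact absurd hA hU.proper
  · exact h

/-- The set of `P` closed under `f` has measure one. -/
private lemma closed_mem {κ δ : Ordinal} {U : Set (Set (Pk κ δ))}
    (hU : IsSCMeasure κ δ U) (hκunc : Cardinal.aleph0 < κ.card)
    (f : Ordinal → Ordinal) (hf : Set.MapsTo f (Set.Iio δ) (Set.Iio δ)) :
    {P : Pk κ δ | ∀ x ∈ P.1, f x ∈ P.1} ∈ U := by
  classical
  rcases hU.ultra {P : Pk κ δ | ∀ x ∈ P.1, f x ∈ P.1} with h | h
  · exact h
  exfalso
  set F : Pk κ δ → Ordinal := fun P =>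
    if hP : ∃ x ∈ P.1, f x ∉ P.1 then hP.choose else 0 with hFdef
  have hFspec : ∀ P : Pk κ δ, P ∈ ({P : Pk κ δ | ∀ x ∈ P.1, f x ∈ P.1}ᶜ) →
      F P ∈ P.1 ∧ f (F P) ∉ P.1 := by
    intro P hP
    have hex : ∃ x ∈ P.1, f x ∉ P.1 := by
      simpa [Set.mem_compl_iff] using hP
    simp only [hFdef, dif_pos hex]
    exact ⟨hex.choose_spec.1, hex.choose_spec.2⟩
  obtain ⟨B, hB, c, hc⟩ := hU.normal _ h F (fun P hP => (hFspec P hP).1)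
  have hBC : B ∩ ({P : Pk κ δ | ∀ x ∈ P.1, f x ∈ P.1}ᶜ) ∈ U :=
    measure_inter hU hκunc hB h
  obtain ⟨P₀, hP₀B, hP₀C⟩ := measure_nonempty hU hBC
  have hcP₀ : c ∈ P₀.1 := by
    have := (hFspec P₀ hP₀C).1
    rwa [hc P₀ hP₀B] at this
  have hcδ : c < δ := P₀.2.1 hcP₀
  have hfcδ : f c < δ := hf hcδ
  have hD : {P : Pk κ δ | f c ∈ P.1} ∈ U := hU.fine (f c) hfcδ
  obtain ⟨P₁, hP₁BC, hP₁D⟩ := measure_nonempty hU (measure_inter hU hκunc hBC hD)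
  have h1 := (hFspec P₁ hP₁BC.2).2
  rw [hc P₁ hP₁BC.1] at h1
  exact h1 hP₁D

private lemma condLe_map {κ δ : Ordinal} (φ : Ordinal → Ordinal)
    (hφ : Set.MapsTo φ (Set.Iio δ) (Set.Iio δ))
    {p q : List (Pk κ δ) × Set (Pk κ δ)} (h : CondLe p q) :
    CondLe (condMap κ δ φ hφ p) (condMap κ δ φ hφ q) := by
  obtain ⟨hpre, hdrop, hsub⟩ := h
  refine ⟨hpre.map _, ?_, Set.image_mono hsub⟩
  intro x hx
  simp only [condMap, List.length_map, ← List.map_drop, List.mem_map] at hx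
  obtain ⟨y, hy, rfl⟩ := hx
  exact ⟨y, hdrop y hy, rfl⟩


/-- for a bijection `f` of `δ` fixing every `ξ < κ`, `π_f` maps conditions
of `ℙ_U` to conditions of `ℙ_U` and is an order-automorphism of `ℙ_U`, with inverse
`π_{f⁻¹}` (here `g` is the inverse bijection of `f` on `δ`). -/
theorem condMap_automorphism (κ δ : Ordinal)
    (hκreg : κ.card.IsRegular) (hκunc : Cardinal.aleph0 < κ.card)
    (hκcard : κ.card.ord = κ) (hδcard : δ.card.ord = δ) (hκδ : κ ≤ δ)
    (U : Set (Set (Pk κ δ))) (hU : IsSCMeasure κ δ U)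
    (f g : Ordinal → Ordinal)
    (hf : Set.BijOn f (Set.Iio δ) (Set.Iio δ)) (hfix : ∀ ξ < κ, f ξ = ξ)
    (hg : Set.BijOn g (Set.Iio δ) (Set.Iio δ))
    (hinv : Set.InvOn g f (Set.Iio δ) (Set.Iio δ)) :
    (∀ p, IsCond κ δ U p → IsCond κ δ U (condMap κ δ f hf.mapsTo p)) ∧
      (∀ p q, IsCond κ δ U p → IsCond κ δ U q →
        (CondLe p q ↔ CondLe (condMap κ δ f hf.mapsTo p) (condMap κ δ f hf.mapsTo q))) ∧
      (∀ p, IsCond κ δ U p →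
        condMap κ δ g hg.mapsTo (condMap κ δ f hf.mapsTo p) = p ∧
        condMap κ δ f hf.mapsTo (condMap κ δ g hg.mapsTo p) = p) := by
  classical
  -- basic facts about g
  have hκδIio : Set.Iio κ ⊆ Set.Iio δ := fun x hx => lt_of_lt_of_le hx hκδ
  have hgfix : ∀ ξ < κ, g ξ = ξ := by
    intro ξ hξ
    have hξδ : ξ ∈ Set.Iio δ := hκδIio hξ
    calc g ξ = g (f ξ) := by rw [hfix ξ hξ]
      _ = ξ := hinv.1 hξδ
  -- round trips on subsets of Iio δ
  have hgf : ∀ s : Set Ordinal, s ⊆ Set.Iio δ → g '' (f '' s) = s := by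
    intro s hs; ext x
    constructor
    · rintro ⟨_, ⟨y, hy, rfl⟩, rfl⟩
      rwa [hinv.1 (hs hy)]
    · intro hx
      exact ⟨f x, ⟨x, hx, rfl⟩, hinv.1 (hs hx)⟩
  have hfg : ∀ s : Set Ordinal, s ⊆ Set.Iio δ → f '' (g '' s) = s := by
    intro s hs; ext x
    constructor
    · rintro ⟨_, ⟨y, hy, rfl⟩, rfl⟩
      rwa [hinv.2 (hs hy)]
    · intro hx
      exact ⟨g x, ⟨x, hx, rfl⟩, hinv.2 (hs hx)⟩
  have hPgf : ∀ P : Pk κ δ, mapP κ δ g hg.mapsTo (mapP κ δ f hf.mapsTo P) = P := by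
    intro P; exact Subtype.ext (hgf P.1 P.2.1)
  have hPfg : ∀ P : Pk κ δ, mapP κ δ f hf.mapsTo (mapP κ δ g hg.mapsTo P) = P := by
    intro P; exact Subtype.ext (hfg P.1 P.2.1)
  -- round trips on conditions
  have hcondgf : ∀ p, condMap κ δ g hg.mapsTo (condMap κ δ f hf.mapsTo p) = p := by
    intro p
    refine Prod.ext ?_ ?_
    · show (p.1.map (mapP κ δ f hf.mapsTo)).map (mapP κ δ g hg.mapsTo) = p.1
      rw [List.map_map]
      exact (List.map_congr_left (fun x _ => hPgf x)).trans (List.map_id p.1)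
    · show (mapP κ δ g hg.mapsTo) '' ((mapP κ δ f hf.mapsTo) '' p.2) = p.2
      rw [Set.image_image]
      simp only [hPgf, Set.image_id']
  have hcondfg : ∀ p, condMap κ δ f hf.mapsTo (condMap κ δ g hg.mapsTo p) = p := by
    intro p
    refine Prod.ext ?_ ?_
    · show (p.1.map (mapP κ δ g hg.mapsTo)).map (mapP κ δ f hf.mapsTo) = p.1
      rw [List.map_map]
      exact (List.map_congr_left (fun x _ => hPfg x)).trans (List.map_id p.1)
    · show (mapP κ δ f hf.mapsTo) '' ((mapP κ δ g hg.mapsTo) '' p.2) = p.2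
      rw [Set.image_image]
      simp only [hPfg, Set.image_id']
  -- f-image preserves strong inclusion
  have hκcard' : Cardinal.aleph0 < κ.card := hκunc
  have hSInc : ∀ P Q : Pk κ δ, SInc κ P.1 Q.1 →
      SInc κ (mapP κ δ f hf.mapsTo P).1 (mapP κ δ f hf.mapsTo Q).1 := by
    intro P Q ⟨hss, hcard⟩
    constructor
    · refine ⟨Set.image_mono hss.1, fun hcon => hss.2 ?_⟩
      have hcon' : f '' Q.1 ⊆ f '' P.1 := hcon
      have := Set.image_mono (f := g) hcon'
      rwa [hgf P.1 P.2.1, hgf Q.1 Q.2.1] at this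
    · have h1 : Cardinal.mk ((f '' P.1) : Set Ordinal) = Cardinal.mk (P.1 : Set Ordinal) :=
        Cardinal.mk_image_eq_of_injOn f P.1 (hf.injOn.mono P.2.1)
      have h2 : (f '' Q.1) ∩ Set.Iio κ = Q.1 ∩ Set.Iio κ := by
        ext x
        constructor
        · rintro ⟨⟨y, hy, rfl⟩, hxκ⟩
          have hyδ : y ∈ Set.Iio δ := Q.2.1 hy
          have hfyδ : f y ∈ Set.Iio δ := hκδIio hxκ
          have : f (f y) = f y := hfix (f y) hxκ
          have heq : f y = y := hf.injOn hfyδ hyδ this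
          rw [heq]
          exact ⟨hy, by rwa [heq] at hxκ⟩
        · rintro ⟨hxQ, hxκ⟩
          exact ⟨⟨x, hxQ, (hfix x hxκ).symm ▸ rfl⟩, hxκ⟩
      show Cardinal.mk ((f '' P.1) : Set Ordinal) < Cardinal.mk ((f '' Q.1) ∩ Set.Iio κ : Set Ordinal)
      rw [h1, h2]
      exact hcard
  -- measure-one sets map to measure-one sets
  have hS : ({P : Pk κ δ | ∀ x ∈ P.1, f x ∈ P.1} ∩
      {P : Pk κ δ | ∀ x ∈ P.1, g x ∈ P.1}) ∈ U :=
    measure_inter hU hκcard' (closed_mem hU hκcard' f hf.mapsTo)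
      (closed_mem hU hκcard' g hg.mapsTo)
  have hSfix : ∀ P : Pk κ δ, P ∈ ({P : Pk κ δ | ∀ x ∈ P.1, f x ∈ P.1} ∩
      {P : Pk κ δ | ∀ x ∈ P.1, g x ∈ P.1}) → mapP κ δ f hf.mapsTo P = P := by
    rintro P ⟨hPf, hPg⟩
    refine Subtype.ext ?_
    ext x
    constructor
    · rintro ⟨y, hy, rfl⟩
      exact hPf y hy
    · intro hx
      exact ⟨g x, hPg x hx, hinv.2 (P.2.1 hx)⟩
  have himage : ∀ A ∈ U, (mapP κ δ f hf.mapsTo) '' A ∈ U := by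
    intro A hA
    refine hU.upward (measure_inter hU hκcard' hA hS) ?_
    rintro P ⟨hPA, hPS⟩
    exact ⟨P, hPA, hSfix P hPS⟩
  -- conditions map to conditions
  have hcond : ∀ p, IsCond κ δ U p → IsCond κ δ U (condMap κ δ f hf.mapsTo p) := by
    intro p ⟨hinc, hmem, hlast⟩
    refine ⟨?_, himage p.2 hmem, ?_⟩
    · unfold IncList at hinc ⊢
      show (p.1.map (mapP κ δ f hf.mapsTo)).Chain' _
      rw [List.Chain', List.isChain_map]
      exact hinc.imp (fun a b hab => hSInc a b hab)
    · intro hne Q hQ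
      have hpne : p.1 ≠ [] := fun h => hne (by simp [condMap, h])
      obtain ⟨R, hR, rfl⟩ := hQ
      have hgl : ((p.1.map (mapP κ δ f hf.mapsTo)).getLast hne) =
          mapP κ δ f hf.mapsTo (p.1.getLast hpne) := List.getLast_map ..
      show SInc κ ((List.map (mapP κ δ f hf.mapsTo) p.1).getLast hne).1
        (mapP κ δ f hf.mapsTo R).1
      rw [hgl]
      exact hSInc _ _ (hlast hpne R hR)
  refine ⟨hcond, ?_, fun p _ => ⟨hcondgf p, hcondfg p⟩⟩
  intro p q _ _
  constructor
  · exact condLe_map f hf.mapsTo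
  · intro h
    have := condLe_map g hg.mapsTo h
    rwa [hcondgf p, hcondgf q] at this
end
end

section
/- Let U be a δ-supercompactness measure for κ, let κ ≤ α < δ, and let f : δ → δ be a bijection with f(ξ) = ξ for all ξ < α. Then for every condition p ∈ ℙ_U, π_f(p)↓α = p↓α; moreover π_f maps α-nice conditions to α-nice conditions, and consequently, for every filter g on ℙ_{U_α}, π_f restricts to an order-automorphism of Q_{αδ}(g) = {q ∈ ℙ^α_U : q↓α ∈ g}. -/
noncomputable section

open Set

section AuxPA

open Set

variable {κ δ α : Ordinal} {f : Ordinal → Ordinal}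

private lemma auxPA_imageInter (hfI : Set.InjOn f (Set.Iio δ)) (hfix : ∀ ξ < α, f ξ = ξ)
    (hαδ : α < δ) {β : Ordinal} (hβα : β ≤ α) {S : Set Ordinal} (hS : S ⊆ Set.Iio δ) :
    f '' S ∩ Set.Iio β = S ∩ Set.Iio β := by
  ext x
  constructor
  · rintro ⟨⟨y, hy, rfl⟩, hxβ⟩
    have hfyα : f y < α := lt_of_lt_of_le hxβ hβα
    have hfy : f (f y) = f y := hfix _ hfyα
    have heq : f y = y := hfI (Set.mem_Iio.2 (lt_trans hfyα hαδ)) (hS hy) hfy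
    exact ⟨by rw [heq]; exact hy, hxβ⟩
  · rintro ⟨hx, hxβ⟩
    exact ⟨⟨x, hx, hfix x (lt_of_lt_of_le hxβ hβα)⟩, hxβ⟩

private lemma auxPA_restrict (hfI : Set.InjOn f (Set.Iio δ)) (hfix : ∀ ξ < α, f ξ = ξ)
    (hαδ : α < δ) (hfM : Set.MapsTo f (Set.Iio δ) (Set.Iio δ)) (P : Pk κ δ) :
    restrictP κ δ α (mapP κ δ f hfM P) = restrictP κ δ α P :=
  Subtype.ext (auxPA_imageInter hfI hfix hαδ le_rfl P.2.1)

private lemma auxPA_sinc (hfI : Set.InjOn f (Set.Iio δ)) (hfix : ∀ ξ < α, f ξ = ξ)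
    (hκα : κ ≤ α) (hαδ : α < δ) {P Q : Set Ordinal}
    (hP : P ⊆ Set.Iio δ) (hQ : Q ⊆ Set.Iio δ) :
    SInc κ (f '' P) (f '' Q) ↔ SInc κ P Q := by
  unfold SInc
  rw [hfI.image_ssubset_image_iff hP hQ, auxPA_imageInter hfI hfix hαδ hκα hQ,
    Cardinal.mk_image_eq_of_injOn f P (hfI.mono hP)]

private lemma auxPA_mapP_inj (hfI : Set.InjOn f (Set.Iio δ))
    (hfM : Set.MapsTo f (Set.Iio δ) (Set.Iio δ)) :
    Function.Injective (mapP κ δ f hfM) := fun P Q h =>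
  Subtype.ext ((hfI.image_eq_image_iff P.2.1 Q.2.1).1 (congrArg Subtype.val h))

private lemma auxPA_nonempty {U : Set (Set (Pk κ δ))} (hU : IsSCMeasure κ δ U)
    {A : Set (Pk κ δ)} (hA : A ∈ U) : A.Nonempty := by
  by_contra h
  rw [Set.not_nonempty_iff_eq_empty] at h
  exact hU.proper (h ▸ hA)

private lemma auxPA_inter {U : Set (Set (Pk κ δ))} (hU : IsSCMeasure κ δ U)
    (hκunc : Cardinal.aleph0 < κ.card) {A B : Set (Pk κ δ)} (hA : A ∈ U) (hB : B ∈ U) :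
    A ∩ B ∈ U := by
  have h2 : Cardinal.mk Bool < κ.card := by
    rw [Cardinal.mk_bool]
    exact lt_trans (by exact_mod_cast Cardinal.nat_lt_aleph0 2) hκunc
  have hmem := hU.complete Bool (fun b => if b then A else B) h2
    (by rintro (_ | _) <;> simpa)
  have heq : (⋂ b : Bool, if b then A else B) = A ∩ B := by
    ext x
    simp [Bool.forall_bool, and_comm]
  exact heq ▸ hmem

private lemma auxPA_closed {U : Set (Set (Pk κ δ))} (hU : IsSCMeasure κ δ U)
    (hκunc : Cardinal.aleph0 < κ.card) {h : Ordinal → Ordinal}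
    (hM : Set.MapsTo h (Set.Iio δ) (Set.Iio δ)) :
    {P : Pk κ δ | h '' P.1 ⊆ P.1} ∈ U := by
  rcases hU.ultra {P : Pk κ δ | h '' P.1 ⊆ P.1} with hA | hA
  · exact hA
  exfalso
  classical
  set F : Pk κ δ → Ordinal :=
    fun P => if hx : ∃ ξ, ξ ∈ P.1 ∧ h ξ ∉ P.1 then hx.choose else 0 with hF
  have hFmem : ∀ P ∈ {P : Pk κ δ | h '' P.1 ⊆ P.1}ᶜ, F P ∈ P.1 ∧ h (F P) ∉ P.1 := by
    intro P hP
    have hx : ∃ ξ, ξ ∈ P.1 ∧ h ξ ∉ P.1 := by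
      simp only [Set.mem_compl_iff, Set.mem_setOf_eq, Set.not_subset] at hP
      obtain ⟨a, ⟨ξ, hξ, rfl⟩, ha⟩ := hP
      exact ⟨ξ, hξ, ha⟩
    rw [hF]
    simp only [dif_pos hx]
    exact hx.choose_spec
  obtain ⟨B, hB, c, hc⟩ := hU.normal _ hA F (fun P hP => (hFmem P hP).1)
  have hBA : B ∩ {P : Pk κ δ | h '' P.1 ⊆ P.1}ᶜ ∈ U := auxPA_inter hU hκunc hB hA
  obtain ⟨P0, hP0B, hP0A⟩ := auxPA_nonempty hU hBA
  have hcδ : c < δ := P0.2.1 (hc P0 hP0B ▸ (hFmem P0 hP0A).1)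
  have hfineS : {P : Pk κ δ | h c ∈ P.1} ∈ U := hU.fine (h c) (hM hcδ)
  obtain ⟨P1, ⟨hP1B, hP1A⟩, hP1f⟩ := auxPA_nonempty hU (auxPA_inter hU hκunc hBA hfineS)
  exact (hc P1 hP1B ▸ (hFmem P1 hP1A).2) hP1f

private lemma auxPA_fixSet {U : Set (Set (Pk κ δ))} (hU : IsSCMeasure κ δ U)
    (hκunc : Cardinal.aleph0 < κ.card)
    (hf : Set.BijOn f (Set.Iio δ) (Set.Iio δ)) :
    {P : Pk κ δ | f '' P.1 = P.1} ∈ U := by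
  classical
  set finv := Function.invFunOn f (Set.Iio δ) with hfinvdef
  have hinv : Set.InvOn finv f (Set.Iio δ) (Set.Iio δ) := hf.invOn_invFunOn
  have hfinv : Set.BijOn finv (Set.Iio δ) (Set.Iio δ) := hf.symm hinv.symm
  have h1 := auxPA_closed hU hκunc (h := f) hf.mapsTo
  have h2 := auxPA_closed hU hκunc (h := finv) hfinv.mapsTo
  apply hU.upward (auxPA_inter hU hκunc h1 h2)
  rintro P ⟨hPf, hPi⟩
  apply Set.Subset.antisymm hPf
  intro ξ hξ
  have hmem : finv ξ ∈ P.1 := hPi ⟨ξ, hξ, rfl⟩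
  exact ⟨finv ξ, hmem, hinv.2 (P.2.1 hξ)⟩

private lemma auxPA_isCond {U : Set (Set (Pk κ δ))} (hU : IsSCMeasure κ δ U)
    (hκunc : Cardinal.aleph0 < κ.card) (hκα : κ ≤ α) (hαδ : α < δ)
    (hf : Set.BijOn f (Set.Iio δ) (Set.Iio δ)) (hfix : ∀ ξ < α, f ξ = ξ)
    {p : List (Pk κ δ) × Set (Pk κ δ)} (hp : IsCond κ δ U p) :
    IsCond κ δ U (condMap κ δ f hf.mapsTo p) := by
  obtain ⟨hchain, hA, hlast⟩ := hp
  refine ⟨?_, ?_, ?_⟩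
  · exact (List.isChain_map _).2 (hchain.imp fun a b hab =>
      (auxPA_sinc hf.injOn hfix hκα hαδ a.2.1 b.2.1).2 hab)
  · apply hU.upward (auxPA_inter hU hκunc hA (auxPA_fixSet hU hκunc hf))
    rintro P ⟨hPA, hPfix⟩
    exact ⟨P, hPA, Subtype.ext hPfix⟩
  · intro hne Q hQ
    obtain ⟨Q', hQ'A, rfl⟩ := hQ
    have hne' : p.1 ≠ [] := by
      intro h; exact hne (by simp [condMap, h])
    have hgl := List.getLast_map (f := mapP κ δ f hf.mapsTo) (l := p.1) hne
    rw [show ((condMap κ δ f hf.mapsTo p).1.getLast hne) =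
      (p.1.map (mapP κ δ f hf.mapsTo)).getLast hne from rfl, hgl]
    exact (auxPA_sinc hf.injOn hfix hκα hαδ (p.1.getLast hne').2.1 Q'.2.1).2
      (hlast hne' Q' hQ'A)

private lemma auxPA_comp_restrict (hf : Set.BijOn f (Set.Iio δ) (Set.Iio δ))
    (hfix : ∀ ξ < α, f ξ = ξ) (hαδ : α < δ) :
    restrictP κ δ α ∘ (mapP κ δ f hf.mapsTo) = restrictP κ δ α :=
  funext (auxPA_restrict hf.injOn hfix hαδ hf.mapsTo)

private lemma auxPA_proj (hf : Set.BijOn f (Set.Iio δ) (Set.Iio δ))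
    (hfix : ∀ ξ < α, f ξ = ξ) (hαδ : α < δ)
    (p : List (Pk κ δ) × Set (Pk κ δ)) :
    condProj κ δ α (condMap κ δ f hf.mapsTo p) = condProj κ δ α p := by
  have hfun := auxPA_comp_restrict (κ := κ) hf hfix hαδ
  unfold condProj condMap projSet
  refine Prod.ext ?_ ?_
  · show (p.1.map (mapP κ δ f hf.mapsTo)).map (restrictP κ δ α) = _
    rw [List.map_map, hfun]
  · show restrictP κ δ α '' (mapP κ δ f hf.mapsTo '' p.2) = _
    rw [← Set.image_comp, hfun]

private lemma auxPA_nice (hf : Set.BijOn f (Set.Iio δ) (Set.Iio δ))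
    (hfix : ∀ ξ < α, f ξ = ξ) (hκα : κ ≤ α) (hαδ : α < δ)
    {p : List (Pk κ δ) × Set (Pk κ δ)} (hp : IsNice κ δ α p) :
    IsNice κ δ α (condMap κ δ f hf.mapsTo p) := by
  have hfun := auxPA_comp_restrict (κ := κ) hf hfix hαδ
  intro t ht htmem
  have hproj : projSet κ δ α (mapP κ δ f hf.mapsTo '' p.2) = projSet κ δ α p.2 := by
    unfold projSet
    rw [← Set.image_comp, hfun]
  obtain ⟨r, hr1, hr2, hr3⟩ := hp t ht (fun x hx => hproj ▸ htmem x hx)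
  refine ⟨r.map (mapP κ δ f hf.mapsTo), ?_, ?_, ?_⟩
  · exact (List.isChain_map _).2 (hr1.imp fun a b hab =>
      (auxPA_sinc hf.injOn hfix hκα hαδ a.2.1 b.2.1).2 hab)
  · intro x hx
    obtain ⟨y, hy, rfl⟩ := List.mem_map.1 hx
    exact ⟨y, hr2 y hy, rfl⟩
  · rw [List.map_map, hfun, hr3]

private lemma auxPA_QSet {U : Set (Set (Pk κ δ))} (hU : IsSCMeasure κ δ U)
    (hκunc : Cardinal.aleph0 < κ.card) (hκα : κ ≤ α) (hαδ : α < δ)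
    (hf : Set.BijOn f (Set.Iio δ) (Set.Iio δ)) (hfix : ∀ ξ < α, f ξ = ξ)
    {g : Set (List (Pk κ α) × Set (Pk κ α))}
    {q : List (Pk κ δ) × Set (Pk κ δ)} (hq : q ∈ QSet κ δ α U g) :
    condMap κ δ f hf.mapsTo q ∈ QSet κ δ α U g := by
  obtain ⟨h1, h2, h3⟩ := hq
  exact ⟨auxPA_isCond hU hκunc hκα hαδ hf hfix h1,
    auxPA_nice hf hfix hκα hαδ h2,
    (auxPA_proj hf hfix hαδ q).symm ▸ h3⟩

private lemma auxPA_condLe (hfI : Set.InjOn f (Set.Iio δ))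
    (hfM : Set.MapsTo f (Set.Iio δ) (Set.Iio δ))
    (q q' : List (Pk κ δ) × Set (Pk κ δ)) :
    CondLe q q' ↔ CondLe (condMap κ δ f hfM q) (condMap κ δ f hfM q') := by
  set M := mapP κ δ f hfM with hM
  have hMinj : Function.Injective M := auxPA_mapP_inj hfI hfM
  constructor
  · rintro ⟨h1, h2, h3⟩
    refine ⟨h1.map M, ?_, Set.image_mono h3⟩
    intro x hx
    simp only [condMap, List.length_map, ← List.map_drop] at hx
    obtain ⟨y, hy, rfl⟩ := List.mem_map.1 hx
    exact ⟨y, h2 y hy, rfl⟩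
  · rintro ⟨h1, h2, h3⟩
    refine ⟨?_, ?_, ?_⟩
    · rw [List.prefix_iff_eq_take] at h1 ⊢
      rw [show (condMap κ δ f hfM q').1 = q'.1.map M from rfl,
        show (condMap κ δ f hfM q).1 = q.1.map M from rfl,
        List.length_map, ← List.map_take] at h1
      exact List.map_injective_iff.2 hMinj h1
    · intro x hx
      have hmx : M x ∈ (condMap κ δ f hfM q).1.drop (condMap κ δ f hfM q').1.length := by
        simp only [condMap, List.length_map, ← List.map_drop]
        exact List.mem_map_of_mem (f := M) hx
      obtain ⟨y, hy, heq⟩ := h2 _ hmx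
      exact hMinj heq ▸ hy
    · intro x hx
      obtain ⟨y, hy, heq⟩ := h3 (Set.mem_image_of_mem M hx)
      exact hMinj heq ▸ hy

end AuxPA

/-- for `κ ≤ α < δ` and a bijection `f` of `δ` fixing every `ξ < α`:
`π_f(p)↓α = p↓α` for every condition `p`, `π_f` maps `α`-nice conditions to `α`-nice
conditions, and for every filter `g` on `ℙ_{U_α}`, `π_f` restricts to an
order-automorphism of `Q_{αδ}(g) = {q ∈ ℙ^α_U : q↓α ∈ g}`. -/
theorem condMap_quotient_automorphism (κ δ : Ordinal)
    (hκreg : κ.card.IsRegular) (hκunc : Cardinal.aleph0 < κ.card)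
    (hκcard : κ.card.ord = κ) (hδcard : δ.card.ord = δ) (hκδ : κ ≤ δ)
    (U : Set (Set (Pk κ δ))) (hU : IsSCMeasure κ δ U)
    (α : Ordinal) (hκα : κ ≤ α) (hαδ : α < δ)
    (f : Ordinal → Ordinal)
    (hf : Set.BijOn f (Set.Iio δ) (Set.Iio δ)) (hfix : ∀ ξ < α, f ξ = ξ) :
    (∀ p, IsCond κ δ U p →
        condProj κ δ α (condMap κ δ f hf.mapsTo p) = condProj κ δ α p) ∧
      (∀ p, IsCond κ δ U p → IsNice κ δ α p →
        IsNice κ δ α (condMap κ δ f hf.mapsTo p)) ∧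
      ∀ g : Set (List (Pk κ α) × Set (Pk κ α)), IsPFilter κ α (Uproj κ δ α U) g →
        (∀ q ∈ QSet κ δ α U g, condMap κ δ f hf.mapsTo q ∈ QSet κ δ α U g) ∧
        (∀ q q', q ∈ QSet κ δ α U g → q' ∈ QSet κ δ α U g →
          (CondLe q q' ↔
            CondLe (condMap κ δ f hf.mapsTo q) (condMap κ δ f hf.mapsTo q'))) ∧
        (∀ q q', q ∈ QSet κ δ α U g → q' ∈ QSet κ δ α U g →
          condMap κ δ f hf.mapsTo q = condMap κ δ f hf.mapsTo q' → q = q') ∧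
        (∀ q ∈ QSet κ δ α U g, ∃ q' ∈ QSet κ δ α U g,
          condMap κ δ f hf.mapsTo q' = q) := by
  have hfI := hf.injOn
  have hMinj : Function.Injective (mapP κ δ f hf.mapsTo) := auxPA_mapP_inj hfI hf.mapsTo
  refine ⟨fun p _ => auxPA_proj hf hfix hαδ p,
    fun p _ hn => auxPA_nice hf hfix hκα hαδ hn, ?_⟩
  intro g hg
  refine ⟨fun q hq => auxPA_QSet hU hκunc hκα hαδ hf hfix hq,
    fun q q' _ _ => auxPA_condLe hfI hf.mapsTo q q', ?_, ?_⟩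
  · intro q q' _ _ heq
    have h1 : q.1 = q'.1 := List.map_injective_iff.2 hMinj (congrArg Prod.fst heq)
    have h2 : q.2 = q'.2 := Set.image_injective.2 hMinj (congrArg Prod.snd heq)
    exact Prod.ext h1 h2
  · intro q hq
    classical
    set finv := Function.invFunOn f (Set.Iio δ) with hfinvdef
    have hinv : Set.InvOn finv f (Set.Iio δ) (Set.Iio δ) := hf.invOn_invFunOn
    have hfinv : Set.BijOn finv (Set.Iio δ) (Set.Iio δ) := hf.symm hinv.symm
    have hfixinv : ∀ ξ < α, finv ξ = ξ := by
      intro ξ hξ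
      have hξδ : ξ < δ := lt_trans hξ hαδ
      have hlv := hinv.1 (Set.mem_Iio.2 hξδ)
      rwa [hfix ξ hξ] at hlv
    refine ⟨condMap κ δ finv hfinv.mapsTo q,
      auxPA_QSet hU hκunc hκα hαδ hfinv hfixinv hq, ?_⟩
    have hMM : ∀ P : Pk κ δ, mapP κ δ f hf.mapsTo (mapP κ δ finv hfinv.mapsTo P) = P := by
      intro P
      apply Subtype.ext
      show f '' (finv '' P.1) = P.1
      apply Set.Subset.antisymm
      · rintro x ⟨y, ⟨z, hz, rfl⟩, rfl⟩
        rw [hinv.2 (P.2.1 hz)]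
        exact hz
      · intro x hx
        exact ⟨finv x, ⟨x, hx, rfl⟩, hinv.2 (P.2.1 hx)⟩
    have hcomp : mapP κ δ f hf.mapsTo ∘ mapP κ δ finv hfinv.mapsTo = id := funext hMM
    refine Prod.ext ?_ ?_
    · show (q.1.map (mapP κ δ finv hfinv.mapsTo)).map (mapP κ δ f hf.mapsTo) = q.1
      rw [List.map_map, hcomp, List.map_id]
    · show mapP κ δ f hf.mapsTo '' (mapP κ δ finv hfinv.mapsTo '' q.2) = q.2
      rw [← Set.image_comp, hcomp, Set.image_id]
end
end

section
/- Let U be a δ-supercompactness measure for κ and let σ be an ω-length ⊏~-increasing sequence of elements of 𝒫_κ(δ). Then F_σ = {(t,A) ∈ ℙ_U : t = σ↾lh(t) and σ(i) ∈ A for all i ≥ lh(t)} is a maximal filter on ℙ_U. -/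
noncomputable section

open Set

section Aux

variable {κ δ : Ordinal} {U : Set (Set (Pk κ δ))}

/-- For a supercompactness measure, the set of `Q` containing a fixed `R` is large. -/
lemma superset_mem (hU : IsSCMeasure κ δ U) (R : Pk κ δ) :
    {Q : Pk κ δ | R.1 ⊆ Q.1} ∈ U := by
  have hlt : Cardinal.mk ↥R.1 < Cardinal.lift.{1,0} κ.card := R.2.2
  obtain ⟨a, ha, hae⟩ := Cardinal.lt_lift_iff.mp hlt
  set ι : Type := Quotient.out a with hι
  have hmkι : Cardinal.mk ι = a := Cardinal.mk_out a
  have he : Nonempty (ι ≃ ↥R.1) := by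
    rw [← Cardinal.lift_mk_eq']
    rw [hmkι, Cardinal.lift_id', hae]
  obtain ⟨e⟩ := he
  have hInt : (⋂ i : ι, {Q : Pk κ δ | ((e i : Ordinal)) ∈ Q.1}) ∈ U := by
    apply hU.complete ι _ (by rw [hmkι]; exact ha)
    intro i
    exact hU.fine (e i) (R.2.1 (e i).2)
  refine hU.upward hInt ?_
  intro Q hQ ξ hξ
  have := Set.mem_iInter.mp hQ (e.symm ⟨ξ, hξ⟩)
  simpa using this

lemma inter_mem (hU : IsSCMeasure κ δ U) (hκunc : Cardinal.aleph0 < κ.card)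
    {A B : Set (Pk κ δ)} (hA : A ∈ U) (hB : B ∈ U) : A ∩ B ∈ U := by
  have hcard : Cardinal.mk Bool < κ.card := by
    rw [Cardinal.mk_bool]
    exact lt_trans (by exact_mod_cast Cardinal.nat_lt_aleph0 2) hκunc
  have h : (⋂ b : Bool, (if b then A else B)) ∈ U :=
    hU.complete Bool _ hcard (by intro b; cases b <;> simpa)
  refine hU.upward h ?_
  intro x hx
  have h1 := Set.mem_iInter.mp hx true
  have h2 := Set.mem_iInter.mp hx false
  simp at h1 h2
  exact ⟨h1, h2⟩

lemma sInc_mono {P Q R : Set Ordinal} (h : SInc κ P Q) (hQR : Q ⊆ R) : SInc κ P R :=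
  ⟨h.1.trans_subset hQR, lt_of_lt_of_le h.2
    (Cardinal.mk_le_mk_of_subset (Set.inter_subset_inter_left _ hQR))⟩

lemma seq_mono {σ : ℕ → Pk κ δ} (hσ : SeqInc κ δ σ) {i j : ℕ} (hij : i ≤ j) :
    (σ i).1 ⊆ (σ j).1 := by
  induction j with
  | zero => simp_all
  | succ j ih =>
    rcases Nat.lt_or_ge i (j+1) with h | h
    · exact (ih (Nat.lt_succ_iff.mp h)).trans (hσ j).1.1
    · have : i = j + 1 := le_antisymm hij h
      subst this; exact subset_rfl

lemma seq_sInc {σ : ℕ → Pk κ δ} (hσ : SeqInc κ δ σ) {i j : ℕ} (hij : i < j) :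
    SInc κ (σ i).1 (σ j).1 :=
  sInc_mono (hσ i) (seq_mono hσ hij)

/-- The canonical conditions belonging to `F_σ`. -/
lemma fcond_mem (hU : IsSCMeasure κ δ U) {σ : ℕ → Pk κ δ} (hσ : SeqInc κ δ σ) (n : ℕ) :
    (((List.range n).map σ, {Q : Pk κ δ | (σ n).1 ⊆ Q.1}) :
      List (Pk κ δ) × Set (Pk κ δ)) ∈ Fseq κ δ U σ := by
  have hchain : IncList κ δ ((List.range n).map σ) := by
    unfold IncList
    show List.IsChain _ _
    rw [List.isChain_map]
    cases n with
    | zero => simp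
    | succ n => rw [List.isChain_range_succ]; intro m _; exact hσ m
  refine ⟨⟨hchain, superset_mem hU _, ?_⟩, by simp, ?_⟩
  · intro hne Q hQ
    have hmem : ((List.range n).map σ).getLast hne ∈ (List.range n).map σ :=
      List.getLast_mem hne
    simp only [List.mem_map, List.mem_range] at hmem
    obtain ⟨j, hj, hjq⟩ := hmem
    rw [← hjq]
    exact sInc_mono (hσ j) ((seq_mono hσ hj).trans hQ)
  · intro i hi
    simp only [List.length_map, List.length_range] at hi
    exact seq_mono hσ hi

end Aux

/-- for every `ω`-length `⊏~`-increasing sequence `σ` from `𝒫_κ(δ)`,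
`F_σ = {(t, A) ∈ ℙ_U : t = σ↾lh t and σ(i) ∈ A for all i ≥ lh t}` is a maximal filter
on `ℙ_U`. -/
theorem Fseq_maximal_filter (κ δ : Ordinal)
    (hκreg : κ.card.IsRegular) (hκunc : Cardinal.aleph0 < κ.card)
    (hκcard : κ.card.ord = κ) (hδcard : δ.card.ord = δ) (hκδ : κ ≤ δ)
    (U : Set (Set (Pk κ δ))) (hU : IsSCMeasure κ δ U)
    (σ : ℕ → Pk κ δ) (hσ : SeqInc κ δ σ) :
    IsPFilter κ δ U (Fseq κ δ U σ) ∧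
      ∀ g, IsPFilter κ δ U g → Fseq κ δ U σ ⊆ g → g = Fseq κ δ U σ := by
  classical
  have hκδ' := hκδ
  constructor
  · refine ⟨fun p hp => hp.1, ?_, ?_, ?_⟩
    · exact ⟨_, fcond_mem hU hσ 0⟩
    · -- upward closed
      rintro p ⟨hpc, hps, hpt⟩ q hqc ⟨hpre, hdrop, hsub⟩
      refine ⟨hqc, ?_, ?_⟩
      · have hlen : q.1.length ≤ p.1.length := hpre.length_le
        have htake : q.1 = p.1.take q.1.length := List.prefix_iff_eq_take.mp hpre
        conv_lhs => rw [htake, hps]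
        rw [← List.map_take, List.take_range, Nat.min_eq_left hlen]
      · intro i hi
        rcases Nat.lt_or_ge i p.1.length with h | h
        · have hip : p.1[i] = σ i := by
            rw [List.getElem_of_eq hps h]
            simp
          have hmem : p.1[i] ∈ p.1.drop q.1.length := by
            have : i - q.1.length < (p.1.drop q.1.length).length := by simp; omega
            have hg : (p.1.drop q.1.length)[i - q.1.length] = p.1[i] := by
              rw [List.getElem_drop]
              congr 1; omega
            rw [← hg]
            exact List.getElem_mem this
          rw [← hip]
          exact hdrop _ hmem
        · exact hsub (hpt i h)
    · -- directed
      have key : ∀ p ∈ Fseq κ δ U σ, ∀ q ∈ Fseq κ δ U σ, p.1.length ≤ q.1.length →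
          ∃ r ∈ Fseq κ δ U σ, CondLe r p ∧ CondLe r q := by
        rintro p ⟨hpc, hps, hpt⟩ q ⟨hqc, hqs, hqt⟩ hlen
        refine ⟨(q.1, p.2 ∩ q.2), ⟨⟨hqc.1, inter_mem hU hκunc hpc.2.1 hqc.2.1, ?_⟩, hqs, ?_⟩, ?_, ?_⟩
        · intro hne Q hQ
          exact hqc.2.2 hne Q hQ.2
        · intro i hi
          exact ⟨hpt i (le_trans hlen hi), hqt i hi⟩
        · -- CondLe r p
          have hpre : p.1 <+: q.1 := by
            rw [List.prefix_iff_eq_take]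
            conv_rhs => rw [hqs]
            rw [← List.map_take, List.take_range, Nat.min_eq_left hlen, ← hps]
          refine ⟨hpre, ?_, Set.inter_subset_left⟩
          intro x hx
          simp only [List.mem_iff_getElem] at hx
          obtain ⟨i, hi, hix⟩ := hx
          have hxi : x = σ (p.1.length + i) := by
            rw [← hix, List.getElem_drop, List.getElem_of_eq hqs]
            simp
          rw [hxi]
          exact hpt _ (Nat.le_add_right _ _)
        · exact ⟨List.prefix_refl _, by simp, Set.inter_subset_right⟩
      intro p hp q hq
      rcases le_total p.1.length q.1.length with h | h
      · exact key p hp q hq h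
      · obtain ⟨r, hr, h1, h2⟩ := key q hq p hp h
        exact ⟨r, hr, h2, h1⟩
  · -- maximality
    intro g hg hsub
    refine Set.Subset.antisymm ?_ hsub
    intro p hp
    have hpc : IsCond κ δ U p := hg.1 p hp
    have hstem : ∀ n, p.1.length ≤ n → ∃ r ∈ g, CondLe r p ∧
        ((List.range n).map σ) <+: r.1 := by
      intro n hn
      have hf : (((List.range n).map σ, {Q : Pk κ δ | (σ n).1 ⊆ Q.1}) :
          List (Pk κ δ) × Set (Pk κ δ)) ∈ g := hsub (fcond_mem hU hσ n)
      obtain ⟨r, hr, h1, h2⟩ := hg.2.2.2 p hp _ hf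
      exact ⟨r, hr, h1, h2.1⟩
    refine ⟨hpc, ?_, ?_⟩
    · obtain ⟨r, hr, ⟨hpre, _, _⟩, hpre2⟩ := hstem p.1.length le_rfl
      have h1 : p.1 = r.1.take p.1.length := List.prefix_iff_eq_take.mp hpre
      have h2 := List.prefix_iff_eq_take.mp hpre2
      simp only [List.length_map, List.length_range] at h2
      exact h1.trans h2.symm
    · intro i hi
      obtain ⟨r, hr, ⟨hpre, hdrop, _⟩, hpre2⟩ := hstem (i + 1) (by omega)
      have hilen : i < r.1.length := by
        have := hpre2.length_le; simp at this; omega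
      have hri : r.1[i] = σ i := by
        have hh := hpre2.getElem (i := i) (by simp)
        rw [← hh]
        simp
      have hmem : r.1[i] ∈ r.1.drop p.1.length := by
        have hlt : i - p.1.length < (r.1.drop p.1.length).length := by
          simp; omega
        have hg2 : (r.1.drop p.1.length)[i - p.1.length] = r.1[i] := by
          rw [List.getElem_drop]; congr 1; omega
        rw [← hg2]; exact List.getElem_mem hlt
      rw [← hri]
      exact hdrop _ hmem
end
end

section
/- Let U be a δ-supercompactness measure for κ and let G be a maximal filter on ℙ_U such that for every m ∈ ω there is p ∈ G with lh(p) > m. Then σ_G = ⋃{stem(p) : p ∈ G} is a well-defined ω-length ⊏~-increasing sequence of elements of 𝒫_κ(δ) and G = F_{σ_G}. -/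
noncomputable section

open Set

/-- if `G` is a maximal filter on `ℙ_U` with stems of unbounded length,
then `σ_G = ⋃{stem(p) : p ∈ G}` is a well-defined `ω`-length `⊏~`-increasing sequence
(every stem of a member of `G` is an initial segment of it) and `G = F_{σ_G}`. -/
theorem maximal_filter_eq_Fseq (κ δ : Ordinal)
    (hκreg : κ.card.IsRegular) (hκunc : Cardinal.aleph0 < κ.card)
    (hκcard : κ.card.ord = κ) (hδcard : δ.card.ord = δ) (hκδ : κ ≤ δ)
    (U : Set (Set (Pk κ δ))) (hU : IsSCMeasure κ δ U)
    (G : Set (List (Pk κ δ) × Set (Pk κ δ))) (hG : IsPFilter κ δ U G)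
    (hmax : ∀ g, IsPFilter κ δ U g → G ⊆ g → g = G)
    (hlen : ∀ m : ℕ, ∃ p ∈ G, m < p.1.length) :
    ∃ σ : ℕ → Pk κ δ, SeqInc κ δ σ ∧
      (∀ p ∈ G, ∀ (i : ℕ) (h : i < p.1.length), p.1.get ⟨i, h⟩ = σ i) ∧
      G = Fseq κ δ U σ := by
  obtain ⟨hcond, hne, hup, hdir⟩ := hG
  -- agreement of stems
  have agree : ∀ p ∈ G, ∀ q ∈ G, ∀ i : ℕ, ∀ (hp : i < p.1.length) (hq : i < q.1.length),
      p.1[i] = q.1[i] := by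
    intro p hp q hq i hip hiq
    obtain ⟨r, hrG, hrp, hrq⟩ := hdir p hp q hq
    rw [hrp.1.getElem hip, hrq.1.getElem hiq]
  choose f hfG hflen using hlen
  set σ : ℕ → Pk κ δ := fun n => (f n).1[n]'(hflen n) with hσdef
  have hσval : ∀ p ∈ G, ∀ i : ℕ, ∀ h : i < p.1.length, p.1[i] = σ i := by
    intro p hp i h
    exact agree p hp (f i) (hfG i) i h (hflen i)
  -- SeqInc
  have hseq : SeqInc κ δ σ := by
    intro n
    have hl := hflen (n + 1)
    have hc := (hcond (f (n+1)) (hfG (n+1))).1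
    have h2 := List.isChain_iff_getElem.mp hc n (by omega)
    rw [hσval _ (hfG (n+1)) n (by omega), hσval _ (hfG (n+1)) (n+1) hl] at h2
    exact h2
  -- stems equal initial segments of σ
  have stem_eq : ∀ l : List (Pk κ δ), (∀ i : ℕ, ∀ h : i < l.length, l[i] = σ i) →
      l = (List.range l.length).map σ := by
    intro l h
    apply List.ext_getElem (by simp)
    intro i h1 h2
    simp [h i h1]
  have map_get : ∀ (n i : ℕ) (h : i < ((List.range n).map σ).length),
      ((List.range n).map σ)[i] = σ i := by
    intro n i h; simp at h; simp [h]
  -- G ⊆ Fseq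
  have hGF : G ⊆ Fseq κ δ U σ := by
    intro p hp
    refine ⟨hcond p hp, by simpa using stem_eq p.1 (hσval p hp), ?_⟩
    intro i hi
    obtain ⟨r, hrG, hrp, hrq⟩ := hdir p hp (f i) (hfG i)
    have hir : i < r.1.length := lt_of_lt_of_le (hflen i) hrq.1.length_le
    rw [← hσval r hrG i hir]
    apply hrp.2.1
    have hd : i - p.1.length < (r.1.drop p.1.length).length := by simp; omega
    have : r.1[i] = (r.1.drop p.1.length)[i - p.1.length]'hd := by
      rw [List.getElem_drop]; congr 1; omega
    rw [this]; exact List.getElem_mem hd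
  -- entries of Fseq members
  have Fget : ∀ p ∈ Fseq κ δ U σ, ∀ i : ℕ, ∀ h : i < p.1.length, p.1[i] = σ i := by
    rintro p ⟨-, hps, -⟩ i h
    rw [List.getElem_of_eq hps h, map_get]
  -- Fseq is a filter
  have hFfilter : IsPFilter κ δ U (Fseq κ δ U σ) := by
    refine ⟨fun p hp => hp.1, ?_, ?_, ?_⟩
    · obtain ⟨p, hp⟩ := hne; exact ⟨p, hGF hp⟩
    · rintro p hpF q hqc ⟨hpre, hdrop, hsub⟩
      obtain ⟨hpc, hps, hpA⟩ := hpF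
      refine ⟨hqc, ?_, ?_⟩
      · apply stem_eq
        intro i h
        rw [hpre.getElem h]
        exact Fget p ⟨hpc, hps, hpA⟩ i (lt_of_lt_of_le h hpre.length_le)
      · intro i hi
        by_cases hip : i < p.1.length
        · apply hdrop
          rw [← Fget p ⟨hpc, hps, hpA⟩ i hip]
          have hd : i - q.1.length < (p.1.drop q.1.length).length := by simp; omega
          have : p.1[i] = (p.1.drop q.1.length)[i - q.1.length]'hd := by
            rw [List.getElem_drop]; congr 1; omega
          rw [this]; exact List.getElem_mem hd
        · exact hsub (hpA i (by omega))
    · have key : ∀ p ∈ Fseq κ δ U σ, ∀ q ∈ Fseq κ δ U σ, p.1.length ≤ q.1.length →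
          ∃ r ∈ Fseq κ δ U σ, CondLe r p ∧ CondLe r q := by
        intro p hpF q hqF hl
        obtain ⟨hpc, hps, hpA⟩ := hpF
        obtain ⟨hqc, hqs, hqA⟩ := hqF
        have hAU : p.2 ∩ q.2 ∈ U := by
          have hB : Cardinal.mk Bool < κ.card := by
            refine lt_trans ?_ hκunc
            exact Cardinal.lt_aleph0_of_finite Bool
          have hint := hU.complete Bool (fun b => if b then p.2 else q.2) hB
            (by rintro (_ | _) <;> simp [hpc.2.1, hqc.2.1])
          have : (⋂ b : Bool, if b then p.2 else q.2) = p.2 ∩ q.2 := by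
            ext x; simp [Set.mem_iInter, Bool.forall_bool, and_comm]
          rwa [this] at hint
        refine ⟨(q.1, p.2 ∩ q.2), ⟨⟨hqc.1, hAU, ?_⟩, hqs, ?_⟩, ⟨?_, ?_, Set.inter_subset_left⟩,
          ⟨List.prefix_refl _, ?_, Set.inter_subset_right⟩⟩
        · intro hne' Q hQ
          exact hqc.2.2 hne' Q hQ.2
        · intro i hi
          exact ⟨hpA i (le_trans hl hi), hqA i hi⟩
        · -- p.1 <+: q.1
          rw [List.prefix_iff_eq_take]
          apply List.ext_getElem (by simp; omega)
          intro i h1 h2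
          rw [List.getElem_take, Fget p ⟨hpc, hps, hpA⟩ i h1,
            Fget q ⟨hqc, hqs, hqA⟩ i (lt_of_lt_of_le h1 hl)]
        · -- new entries of q.1 lie in p.2
          intro x hx
          obtain ⟨i, hi, rfl⟩ := List.mem_iff_getElem.mp hx
          have hi' : p.1.length + i < q.1.length := by
            have := hi; simp at this; omega
          rw [List.getElem_drop, Fget q ⟨hqc, hqs, hqA⟩ _ hi']
          exact hpA _ (by omega)
        · intro x hx
          simp [List.drop_length] at hx
      intro p hp q hq
      rcases le_total p.1.length q.1.length with h | h
      · exact key p hp q hq h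
      · obtain ⟨r, hr, h1, h2⟩ := key q hq p hp h
        exact ⟨r, hr, h2, h1⟩
  have hFeq := hmax (Fseq κ δ U σ) hFfilter hGF
  refine ⟨σ, hseq, ?_, hFeq.symm⟩
  intro p hp i h
  simpa [List.get_eq_getElem] using hσval p hp i h
end
end
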